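/- arXiv:2009.04785 — 4 statements merged into one kernel-verified Lean document; each statement's English description precedes it below -/
import Mathlib

section
/- Let (S_t)_{t≥0} be a subordinator with Laplace exponent given by a Bernstein function φ with φ(0+)=0, and assume liminf_{s→∞} φ(2s)/φ(s) > 1. Then for every p≤0 and θ≥0 there is a constant C=C(p,θ,φ)>0 such that E[(∫₀^T t^{−θ} dS_t)^p] ≤ C · T^{−pθ} · [φ^{−1}(1/T)]^{−p} for all T∈(0,1]. -/
open MeasureTheory ProbabilityTheory Filter Set
open scoped ENNReal NNReal Topology

noncomputable section

variable {Ω : Type*}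

/-- A subordinator: a càdlàg (here: right-continuous) increasing process starting at `0`
with stationary, independent increments. -/
structure IsSubordinator [MeasureSpace Ω] (S : ℝ → Ω → ℝ) : Prop where
  measurable : ∀ t, Measurable (S t)
  init : ∀ ω, S 0 ω = 0
  mono : ∀ ω, Monotone fun t => S t ω
  right_cont : ∀ ω t, ContinuousWithinAt (fun s => S s ω) (Ici t) t
  indep : ∀ (n : ℕ) (t : Fin (n + 1) → ℝ), Monotone t → (∀ i, 0 ≤ t i) →
    iIndepFun
      (fun i : Fin n => fun ω => S (t i.succ) ω - S (t i.castSucc) ω) ℙ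
  stationary : ∀ s t : ℝ, 0 ≤ s → s ≤ t →
    Measure.map (fun ω => S t ω - S s ω) ℙ = Measure.map (S (t - s)) ℙ

/-- The path `t ↦ S t ω` of a subordinator, as a Stieltjes function. -/
def IsSubordinator.path [MeasureSpace Ω] {S : ℝ → Ω → ℝ} (hS : IsSubordinator S)
    (ω : Ω) : StieltjesFunction ℝ where
  toFun := fun t => S t ω
  mono' := hS.mono ω
  right_continuous' := fun t => hS.right_cont ω t

/-- The pathwise Lebesgue–Stieltjes integral `∫_A f(t) dS_t(ω)`, with values in `[0,∞]`. -/
def IsSubordinator.integral [MeasureSpace Ω] {S : ℝ → Ω → ℝ} (hS : IsSubordinator S)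
    (f : ℝ → ℝ) (A : Set ℝ) (ω : Ω) : ℝ≥0∞ :=
  ∫⁻ t in A, ENNReal.ofReal (f t) ∂(hS.path ω).measure

/-- A Bernstein function with `φ(0+) = 0` (extended by `φ(0) = 0`). -/
structure IsBernstein (φ : ℝ → ℝ) : Prop where
  pos : ∀ s, 0 < s → 0 < φ s
  smooth : ContDiffOn ℝ (⊤ : ℕ∞) φ (Ioi 0)
  alt : ∀ n : ℕ, 1 ≤ n → ∀ s, 0 < s →
    0 ≤ (-1 : ℝ) ^ (n + 1) * iteratedDerivWithin n φ (Ioi 0) s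
  zero : φ 0 = 0
  zero_lim : Tendsto φ (𝓝[>] 0) (𝓝 0)

/-- `φ` is the Laplace exponent of the process `S`:
`E[exp(-r S_t)] = exp(-t φ(r))` for all `r > 0`, `t ≥ 0`. -/
def IsLaplaceExponent [MeasureSpace Ω] (S : ℝ → Ω → ℝ) (φ : ℝ → ℝ) : Prop :=
  ∀ r : ℝ, 0 < r → ∀ t : ℝ, 0 ≤ t →
    ∫ ω, Real.exp (-(r * S t ω)) ∂ℙ = Real.exp (-(t * φ r))

/-- `exp(-x)` for `x ∈ [0,∞]`, with the convention `exp(-∞) = 0`. -/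
def expNeg (x : ℝ≥0∞) : ℝ≥0∞ :=
  if x = ∞ then 0 else ENNReal.ofReal (Real.exp (-x.toReal))

/-- The generalized (right-continuous) inverse `φ⁻¹(y) = inf{s > 0 : φ(s) > y}`. -/
def genInv (φ : ℝ → ℝ) (y : ℝ) : ℝ := sInf {s : ℝ | 0 < s ∧ y < φ s}

/-- Antitonicity of `rpow` with nonpositive exponents on `ℝ≥0∞`. -/
lemma my_rpow_anti {x y : ℝ≥0∞} {p : ℝ} (hp : p ≤ 0) (hxy : x ≤ y) : y ^ p ≤ x ^ p := by
  rcases hp.eq_or_lt with h0 | hneg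
  · simp [h0]
  · have hz : ∀ z : ℝ≥0∞, z ^ p = (z ^ (-p))⁻¹ := fun z => by
      rw [← ENNReal.rpow_neg, neg_neg]
    rw [hz, hz]
    exact ENNReal.inv_le_inv.mpr (ENNReal.rpow_le_rpow hxy (neg_nonneg.mpr hp))

/-- **Negative-moment estimate for `∫₀^T t^{−θ} dS_t`, `T ≤ 1`.**
If `liminf_{s→∞} φ(2s)/φ(s) > 1`, then for every `p ≤ 0` and `θ ≥ 0` there is `C > 0` with
`E[(∫₀^T t^{−θ} dS_t)^p] ≤ C T^{−pθ} [φ^{−1}(1/T)]^{−p}` for all `T ∈ (0,1]`. -/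
theorem negative_moment_estimate_small_T
    [MeasureSpace Ω] [IsProbabilityMeasure (ℙ : Measure Ω)]
    (S : ℝ → Ω → ℝ) (hS : IsSubordinator S)
    (φ : ℝ → ℝ) (hφ : IsBernstein φ) (hLap : IsLaplaceExponent S φ)
    (h : 1 < Filter.liminf (fun s => φ (2 * s) / φ s) atTop)
    (p θ : ℝ) (hp : p ≤ 0) (hθ : 0 ≤ θ) :
    ∃ C > (0 : ℝ), ∀ T : ℝ, 0 < T → T ≤ 1 →
      ∫⁻ ω, (hS.integral (fun t => t ^ (-θ)) (Ioc 0 T) ω) ^ p ∂ℙ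
        ≤ ENNReal.ofReal (C * T ^ (-(p * θ)) * genInv φ (1 / T) ^ (-p)) := by
  rcases hp.eq_or_lt with hp0 | hpneg
  · -- trivial case `p = 0`
    subst hp0
    refine ⟨1, one_pos, fun T hT hT1 => ?_⟩
    simp [ENNReal.rpow_zero, Real.rpow_zero, measure_univ]
  -- main case `p < 0`
  have hq : (0:ℝ) < -p := neg_pos.mpr hpneg
  -- monotonicity of φ
  have hmonoOn : MonotoneOn φ (Ioi 0) := by
    apply monotoneOn_of_deriv_nonneg (convex_Ioi 0) hφ.smooth.continuousOn
    · rw [interior_Ioi]; exact hφ.smooth.differentiableOn (by simp)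
    · intro x hx
      rw [interior_Ioi] at hx
      have h1 := hφ.alt 1 le_rfl x hx
      rw [iteratedDerivWithin_one,
        derivWithin_of_isOpen isOpen_Ioi hx] at h1
      norm_num at h1; exact h1
  have hmono : ∀ ⦃x y : ℝ⦄, 0 ≤ x → x ≤ y → φ x ≤ φ y := by
    intro x y hx hxy
    rcases hx.eq_or_lt with h0 | h0
    · rw [← h0, hφ.zero]
      rcases (hx.trans hxy).eq_or_lt with h1 | h1
      · rw [← h1, hφ.zero]
      · exact (hφ.pos y h1).le
    · exact hmonoOn h0 (h0.trans_le hxy) hxy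
  -- doubling constants
  set L := Filter.liminf (fun s => φ (2 * s) / φ s) atTop with hL
  have hbdd : IsBoundedUnder (· ≥ ·) atTop fun s => φ (2 * s) / φ s := by
    refine ⟨0, ?_⟩
    rw [eventually_map]
    filter_upwards [eventually_ge_atTop (1:ℝ)] with s hs
    exact div_nonneg (hφ.pos _ (by linarith)).le (hφ.pos s (by linarith)).le
  set c₁ : ℝ := (1 + L) / 2 with hc₁def
  have hc₁ : 1 < c₁ := by rw [hc₁def]; linarith
  have hc₁L : c₁ < L := by rw [hc₁def]; linarith
  have hev := eventually_lt_of_lt_liminf hc₁L hbdd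
  obtain ⟨s₀', hs₀'⟩ := eventually_atTop.mp hev
  set s₀ : ℝ := max s₀' 1 with hs₀def
  have hs₀pos : 0 < s₀ := lt_of_lt_of_le one_pos (le_max_right _ _)
  have hdou : ∀ s, s₀ ≤ s → c₁ * φ s ≤ φ (2 * s) := by
    intro s hs
    have hsp : 0 < s := lt_of_lt_of_le hs₀pos hs
    have h2 := hs₀' s (le_trans (le_max_left _ _) hs)
    exact ((lt_div_iff₀ (hφ.pos s hsp)).mp h2).le
  have hiter : ∀ (k : ℕ) (s : ℝ), s₀ ≤ s → c₁ ^ k * φ s ≤ φ (2 ^ k * s) := by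
    intro k
    induction k with
    | zero => intro s _; simp
    | succ k ih =>
      intro s hs
      have hsp : 0 < s := lt_of_lt_of_le hs₀pos hs
      have h2k : (1:ℝ) ≤ 2 ^ k := one_le_pow₀ (by norm_num)
      have hs2k : s₀ ≤ 2 ^ k * s := le_trans hs (le_mul_of_one_le_left hsp.le h2k)
      calc c₁ ^ (k+1) * φ s = c₁ * (c₁ ^ k * φ s) := by ring
        _ ≤ c₁ * φ (2 ^ k * s) := mul_le_mul_of_nonneg_left (ih s hs) (by linarith)
        _ ≤ φ (2 * (2 ^ k * s)) := hdou _ hs2k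
        _ = φ (2 ^ (k+1) * s) := by rw [show 2 * (2 ^ k * s) = (2:ℝ) ^ (k+1) * s by ring]
  have hunb : ∀ M : ℝ, ∃ s, 0 < s ∧ M < φ s := by
    intro M
    have h1 : Tendsto (fun k : ℕ => c₁ ^ k * φ s₀) atTop atTop :=
      (tendsto_pow_atTop_atTop_of_one_lt hc₁).atTop_mul_const (hφ.pos s₀ hs₀pos)
    obtain ⟨k, hk⟩ := (h1.eventually_gt_atTop M).exists
    exact ⟨2 ^ k * s₀, by positivity, lt_of_lt_of_le hk (hiter k s₀ le_rfl)⟩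
  -- small values of φ near 0
  obtain ⟨δ, hδ1, hδ⟩ := mem_nhdsGT_iff_exists_Ioo_subset.mp
    (hφ.zero_lim (Iio_mem_nhds one_pos))
  have hδpos : 0 < δ := hδ1
  -- k₀
  obtain ⟨k₀, hk₀⟩ := (((tendsto_pow_atTop_atTop_of_one_lt
    (one_lt_two (α := ℝ))).atTop_mul_const hδpos).eventually_ge_atTop s₀).exists
  set β : ℝ := (c₁ ^ k₀)⁻¹ with hβdef
  have hβ : 0 < β := by positivity
  set A : ℝ := β * (c₁ - 1) with hAdef
  have hA : 0 < A := mul_pos hβ (by linarith)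
  -- the series
  set u : ℕ → ℝ := fun k => ((1/2:ℝ) ^ (k+1)) ^ p * Real.exp (1 - β * c₁ ^ k) with hudef
  have hu_pos : ∀ k, 0 < u k := fun k =>
    mul_pos (Real.rpow_pos_of_pos (by positivity) p) (Real.exp_pos _)
  have hu_rec : ∀ k, u (k+1) = u k * ((1/2:ℝ) ^ p * Real.exp (-(A * c₁ ^ k))) := by
    intro k
    rw [hudef]
    simp only
    rw [pow_succ ((1:ℝ)/2) (k+1), Real.mul_rpow (by positivity) (by norm_num),
      show (1 - β * c₁ ^ (k+1)) = (1 - β * c₁ ^ k) + (-(A * c₁ ^ k)) by rw [hAdef]; ring,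
      Real.exp_add]
    ring
  have hfact : Tendsto (fun k : ℕ => (1/2:ℝ) ^ p * Real.exp (-(A * c₁ ^ k))) atTop (𝓝 0) := by
    have h1 : Tendsto (fun k : ℕ => A * c₁ ^ k) atTop atTop :=
      (tendsto_pow_atTop_atTop_of_one_lt hc₁).const_mul_atTop hA
    have h2 : Tendsto (fun k : ℕ => -(A * c₁ ^ k)) atTop atBot :=
      tendsto_neg_atTop_atBot.comp h1
    have h3 := (Real.tendsto_exp_atBot.comp h2).const_mul ((1/2:ℝ) ^ p)
    rw [mul_zero] at h3
    exact h3
  have hsummable : Summable u := by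
    apply summable_of_ratio_norm_eventually_le (r := 1/2) (by norm_num)
    filter_upwards [hfact.eventually_lt_const (by norm_num : (0:ℝ) < 1/2)] with k hk
    rw [Real.norm_eq_abs, Real.norm_eq_abs, abs_of_pos (hu_pos _), abs_of_pos (hu_pos _),
      hu_rec k, mul_comm (1/2 : ℝ) (u k)]
    exact mul_le_mul_of_nonneg_left hk.le (hu_pos k).le
  set K : ℝ := ∑' k, u k with hKdef
  have hK0 : 0 ≤ K := tsum_nonneg fun k => (hu_pos k).le
  refine ⟨1 + K, by positivity, fun T hT hT1 => ?_⟩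
  have hT0 : (0:ℝ) ≤ T := hT.le
  have hTinv : (1:ℝ) ≤ 1 / T := one_le_one_div hT hT1
  -- the generalized inverse at 1/T
  set M : Set ℝ := {s : ℝ | 0 < s ∧ 1 / T < φ s} with hMdef
  have hMne : M.Nonempty := by
    obtain ⟨s, h1, h2⟩ := hunb (1 / T)
    exact ⟨s, h1, h2⟩
  have hMδ : ∀ x ∈ M, δ ≤ x := by
    rintro x ⟨hx1, hx2⟩
    by_contra hlt
    push_neg at hlt
    have h5 := hδ ⟨hx1, hlt⟩
    rw [mem_preimage, mem_Iio] at h5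
    linarith
  set b : ℝ := genInv φ (1 / T) with hbdef
  have hbeq : b = sInf M := rfl
  have hbδ : δ ≤ b := by rw [hbeq]; exact le_csInf hMne hMδ
  have hb0 : 0 < b := lt_of_lt_of_le hδpos hbδ
  have hφb : 1 / T ≤ φ b := by
    have hcont : ContinuousAt φ b :=
      hφ.smooth.continuousOn.continuousAt (isOpen_Ioi.mem_nhds hb0)
    have htd : Tendsto φ (𝓝[>] b) (𝓝 (φ b)) := hcont.tendsto.mono_left nhdsWithin_le_nhds
    refine ge_of_tendsto htd ?_
    filter_upwards [self_mem_nhdsWithin] with x (hx : b < x)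
    obtain ⟨m, hmM, hmx⟩ := exists_lt_of_csInf_lt hMne (hbeq ▸ hx)
    exact le_trans hmM.2.le (hmono hmM.1.le hmx.le)
  have hrb : ∀ k : ℕ, β * c₁ ^ k ≤ T * φ (2 ^ k * b) := by
    intro k
    have h2kb : (1:ℝ) ≤ 2 ^ k := one_le_pow₀ (by norm_num)
    rcases le_or_gt k₀ k with hk | hk
    · have h1 : s₀ ≤ 2 ^ k₀ * b := le_trans hk₀ (mul_le_mul_of_nonneg_left hbδ (by positivity))
      have h2 := hiter (k - k₀) (2 ^ k₀ * b) h1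
      have harg : (2:ℝ) ^ (k - k₀) * (2 ^ k₀ * b) = 2 ^ k * b := by
        rw [← mul_assoc, ← pow_add, Nat.sub_add_cancel hk]
      rw [harg] at h2
      have h3 : φ b ≤ φ (2 ^ k₀ * b) :=
        hmono hb0.le (le_mul_of_one_le_left hb0.le (one_le_pow₀ (by norm_num)))
      have h4 : 1 / T ≤ φ (2 ^ k₀ * b) := le_trans hφb h3
      have hβc : β * c₁ ^ k = c₁ ^ (k - k₀) := by
        rw [hβdef, inv_mul_eq_div, div_eq_iff (by positivity : (c₁:ℝ) ^ k₀ ≠ 0)]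
        exact (pow_sub_mul_pow c₁ hk).symm
      rw [hβc]
      have hcpow : (0:ℝ) < c₁ ^ (k - k₀) := by positivity
      have h5 : c₁ ^ (k - k₀) * (1 / T) ≤ c₁ ^ (k - k₀) * φ (2 ^ k₀ * b) :=
        mul_le_mul_of_nonneg_left h4 hcpow.le
      have h6 : c₁ ^ (k - k₀) * φ (2 ^ k₀ * b) ≤ φ (2 ^ k * b) := h2
      have h7 : c₁ ^ (k - k₀) * (1 / T) ≤ φ (2 ^ k * b) := le_trans h5 h6
      calc c₁ ^ (k - k₀) = T * (c₁ ^ (k - k₀) * (1 / T)) := by field_simp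
        _ ≤ T * φ (2 ^ k * b) := mul_le_mul_of_nonneg_left h7 hT0
    · have h1 : β * c₁ ^ k ≤ 1 := by
        have h2 : c₁ ^ k ≤ c₁ ^ k₀ := pow_le_pow_right₀ hc₁.le hk.le
        calc β * c₁ ^ k ≤ β * c₁ ^ k₀ := mul_le_mul_of_nonneg_left h2 hβ.le
          _ = 1 := inv_mul_cancel₀ (by positivity)
      have h2 : φ b ≤ φ (2 ^ k * b) := hmono hb0.le (le_mul_of_one_le_left hb0.le h2kb)
      have h3 : 1 / T ≤ φ (2 ^ k * b) := le_trans hφb h2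
      have h4 : (1:ℝ) ≤ T * φ (2 ^ k * b) := by
        calc (1:ℝ) = T * (1 / T) := by field_simp
          _ ≤ T * φ (2 ^ k * b) := mul_le_mul_of_nonneg_left h3 hT0
      linarith
  -- basic positivity
  set a : ℝ := b⁻¹ with hadef
  have ha0 : 0 < a := by positivity
  have hSnn : ∀ ω, 0 ≤ S T ω := fun ω => by
    rw [← hS.init ω]; exact hS.mono ω hT0
  -- measurability of the level sets
  have hA_k : ∀ k : ℕ, MeasurableSet {ω : Ω | S T ω ≤ (1/2) ^ k * a} := fun k =>
    measurableSet_le (hS.measurable T) measurable_const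
  -- Markov inequality via the Laplace transform
  have hMarkov : ∀ k : ℕ, (ℙ {ω : Ω | S T ω ≤ (1/2) ^ k * a})
      ≤ ENNReal.ofReal (Real.exp (1 - β * c₁ ^ k)) := by
    intro k
    set r : ℝ := 2 ^ k * b with hrdef
    have hrpos : 0 < r := by positivity
    set f : Ω → ℝ := fun ω => Real.exp (-(r * S T ω)) with hfdef
    have hfmeas : Measurable f := (((hS.measurable T).const_mul r).neg).exp
    have hfint : Integrable f ℙ := by
      refine (integrable_const (1:ℝ)).mono' hfmeas.aestronglyMeasurable (ae_of_all _ fun ω => ?_)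
      rw [Real.norm_eq_abs, abs_of_pos (Real.exp_pos _)]
      exact Real.exp_le_one_iff.mpr (neg_nonpos.mpr (mul_nonneg hrpos.le (hSnn ω)))
    have hlint : ∫⁻ ω, ENNReal.ofReal (f ω) ∂ℙ = ENNReal.ofReal (Real.exp (-(T * φ r))) := by
      rw [← ofReal_integral_eq_lintegral_ofReal hfint (ae_of_all _ fun ω => (Real.exp_pos _).le),
        hLap r hrpos T hT0]
    have hsub : {ω : Ω | S T ω ≤ (1/2) ^ k * a}
        ⊆ {ω : Ω | ENNReal.ofReal (Real.exp (-1)) ≤ ENNReal.ofReal (f ω)} := by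
      intro ω hω
      apply ENNReal.ofReal_le_ofReal
      apply Real.exp_le_exp.mpr
      have h1 : r * S T ω ≤ r * ((1/2) ^ k * a) :=
        mul_le_mul_of_nonneg_left hω hrpos.le
      have heq : r * ((1/2) ^ k * a) = 1 := by
        rw [hrdef, hadef,
          show (2:ℝ) ^ k * b * ((1/2) ^ k * b⁻¹) = ((2:ℝ) * (1/2)) ^ k * (b * b⁻¹) by
            rw [mul_pow]; ring,
          mul_inv_cancel₀ hb0.ne']
        norm_num
      linarith
    have hml := mul_meas_ge_le_lintegral₀ (μ := ℙ)
      ((ENNReal.measurable_ofReal.comp hfmeas).aemeasurable) (ENNReal.ofReal (Real.exp (-1)))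
    have h2 : ENNReal.ofReal (Real.exp (-1)) * ℙ {ω : Ω | S T ω ≤ (1/2) ^ k * a}
        ≤ ENNReal.ofReal (Real.exp (-(T * φ r))) := by
      calc ENNReal.ofReal (Real.exp (-1)) * ℙ {ω : Ω | S T ω ≤ (1/2) ^ k * a}
          ≤ ENNReal.ofReal (Real.exp (-1)) *
            ℙ {ω : Ω | ENNReal.ofReal (Real.exp (-1)) ≤ ENNReal.ofReal (f ω)} :=
            mul_le_mul_right (measure_mono hsub) _
        _ ≤ ∫⁻ ω, ENNReal.ofReal (f ω) ∂ℙ := hml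
        _ = _ := hlint
    have hne0 : ENNReal.ofReal (Real.exp (-1)) ≠ 0 :=
      (ENNReal.ofReal_pos.mpr (Real.exp_pos _)).ne'
    have h3 : ℙ {ω : Ω | S T ω ≤ (1/2) ^ k * a}
        ≤ (ENNReal.ofReal (Real.exp (-1)))⁻¹ * ENNReal.ofReal (Real.exp (-(T * φ r))) := by
      rw [← one_mul (ℙ {ω : Ω | S T ω ≤ (1/2) ^ k * a}),
        ← ENNReal.inv_mul_cancel hne0 ENNReal.ofReal_ne_top, mul_assoc]
      exact mul_le_mul_right h2 _
    refine h3.trans ?_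
    rw [← ENNReal.ofReal_inv_of_pos (Real.exp_pos _), ← Real.exp_neg, neg_neg,
      ← ENNReal.ofReal_mul (Real.exp_pos 1).le, ← Real.exp_add]
    apply ENNReal.ofReal_le_ofReal
    apply Real.exp_le_exp.mpr
    have := hrb k
    rw [hrdef] at *
    linarith [hrb k]
  -- pointwise domination of the integral from below
  set Y : Ω → ℝ≥0∞ := fun ω => ENNReal.ofReal (S T ω) with hYdef
  set coeff : ℕ → ℝ≥0∞ := fun k => ENNReal.ofReal (((1/2:ℝ) ^ (k+1) * a) ^ p) with hcoeffdef
  set G : Ω → ℝ≥0∞ := fun ω => ENNReal.ofReal (a ^ p) +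
    ∑' k, ({ω : Ω | S T ω ≤ (1/2) ^ k * a}).indicator (fun _ => coeff k) ω with hGdef
  have hpoint : ∀ ω, (Y ω) ^ p ≤ G ω := by
    intro ω
    have hynn : 0 ≤ S T ω := hSnn ω
    rcases hynn.eq_or_lt with hy0 | hy0
    · -- S T ω = 0
      have hYtop : (Y ω) ^ p = ⊤ := by
        rw [hYdef]; simp only
        rw [← hy0, ENNReal.ofReal_zero, ENNReal.zero_rpow_of_neg hpneg]
      rw [hYtop, top_le_iff, hGdef]
      simp only
      have hind : ∀ k : ℕ, ({ω : Ω | S T ω ≤ (1/2) ^ k * a}).indicator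
          (fun _ => coeff k) ω = coeff k := by
        intro k
        rw [indicator_of_mem]
        show S T ω ≤ (1/2) ^ k * a
        rw [← hy0]
        positivity
      have hcoefftop : (∑' k, ({ω : Ω | S T ω ≤ (1/2) ^ k * a}).indicator
          (fun _ => coeff k) ω) = ⊤ := by
        simp_rw [hind]
        by_contra hne
        have hto := ENNReal.tendsto_atTop_zero_of_tsum_ne_top hne
        have hcoeffat : Tendsto (fun k : ℕ => ((1/2:ℝ) ^ (k+1) * a) ^ p) atTop atTop := by
          have hbase : Tendsto (fun k : ℕ => (2:ℝ) ^ (k+1) * a⁻¹) atTop atTop :=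
            (((tendsto_pow_atTop_atTop_of_one_lt (one_lt_two (α := ℝ))).comp
              (tendsto_add_atTop_nat 1)).atTop_mul_const (by positivity))
          have hcomp := (tendsto_rpow_atTop hq).comp hbase
          have hfix : ∀ k : ℕ, ((2:ℝ) ^ (k+1) * a⁻¹) ^ (-p) = ((1/2:ℝ) ^ (k+1) * a) ^ p := by
            intro k
            have hpos : (0:ℝ) < (1/2:ℝ) ^ (k+1) * a := by positivity
            have hinv : ((1/2:ℝ) ^ (k+1) * a)⁻¹ = (2:ℝ) ^ (k+1) * a⁻¹ := by
              rw [mul_inv]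
              congr 1
              rw [← inv_pow]
              norm_num
            rw [← hinv, Real.inv_rpow hpos.le, Real.rpow_neg hpos.le, inv_inv]
          exact Tendsto.congr (fun k => hfix k) hcomp
        obtain ⟨k, hk1, hk2⟩ := ((hcoeffat.eventually_ge_atTop 1).and
          (hto.eventually (gt_mem_nhds (show (0:ℝ≥0∞) < 1 by norm_num)))).exists
        have hge1 : (1:ℝ≥0∞) ≤ coeff k := by
          rw [hcoeffdef]
          exact ENNReal.one_le_ofReal.mpr hk1
        exact absurd (lt_of_le_of_lt hge1 hk2) (lt_irrefl _)
      rw [hcoefftop]; simp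
    · rcases le_or_gt a (S T ω) with hay | hya
      · have h1 : (Y ω) ^ p ≤ ENNReal.ofReal (a ^ p) := by
          rw [hYdef]; simp only
          rw [ENNReal.ofReal_rpow_of_pos hy0]
          exact ENNReal.ofReal_le_ofReal (Real.rpow_le_rpow_of_nonpos ha0 hay hp)
        exact h1.trans le_self_add
      · have hPex : ∃ k : ℕ, (1/2:ℝ) ^ k * a < S T ω := by
          have ht0 : Tendsto (fun k : ℕ => (1/2:ℝ) ^ k * a) atTop (𝓝 0) := by
            have := (tendsto_pow_atTop_nhds_zero_of_lt_one (by norm_num : (0:ℝ) ≤ 1/2)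
              (by norm_num : (1/2:ℝ) < 1)).mul_const a
            rwa [zero_mul] at this
          exact (ht0.eventually (Iio_mem_nhds hy0)).exists
        have hP0 : ¬ ((1/2:ℝ) ^ 0 * a < S T ω) := by
          simp only [pow_zero, one_mul]
          exact not_lt.mpr hya.le
        set k' := Nat.find hPex with hk'def
        have hk'spec : (1/2:ℝ) ^ k' * a < S T ω := Nat.find_spec hPex
        have hk'pos : k' ≠ 0 := by
          intro h0
          rw [h0] at hk'spec
          exact hP0 hk'spec
        obtain ⟨k, hk⟩ : ∃ k, k' = k + 1 :=
          ⟨k' - 1, (Nat.succ_pred_eq_of_pos (Nat.pos_of_ne_zero hk'pos)).symm⟩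
        have h1 : ¬ ((1/2:ℝ) ^ k * a < S T ω) := Nat.find_min hPex (by omega)
        have h2 : (1/2:ℝ) ^ (k+1) * a < S T ω := hk ▸ hk'spec
        have hmem : ω ∈ {ω : Ω | S T ω ≤ (1/2) ^ k * a} := not_lt.mp h1
        calc (Y ω) ^ p = ENNReal.ofReal ((S T ω) ^ p) := by
              rw [hYdef]; exact ENNReal.ofReal_rpow_of_pos hy0
          _ ≤ coeff k := by
              rw [hcoeffdef]
              exact ENNReal.ofReal_le_ofReal
                (Real.rpow_le_rpow_of_nonpos (by positivity) h2.le hp)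
          _ = ({ω : Ω | S T ω ≤ (1/2) ^ k * a}).indicator (fun _ => coeff k) ω :=
              (indicator_of_mem hmem (fun _ => coeff k)).symm
          _ ≤ ∑' k, ({ω : Ω | S T ω ≤ (1/2) ^ k * a}).indicator (fun _ => coeff k) ω :=
              ENNReal.le_tsum k
          _ ≤ G ω := le_add_self
  -- lower bound for the Stieltjes integral
  have hX : ∀ ω, (hS.integral (fun t => t ^ (-θ)) (Ioc 0 T) ω) ^ p
      ≤ ENNReal.ofReal ((T ^ (-θ)) ^ p) * (Y ω) ^ p := by
    intro ω
    have hge : ENNReal.ofReal (T ^ (-θ)) * Y ω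
        ≤ hS.integral (fun t => t ^ (-θ)) (Ioc 0 T) ω := by
      have hmeaseq : (hS.path ω).measure (Ioc 0 T) = Y ω := by
        rw [StieltjesFunction.measure_Ioc]
        show ENNReal.ofReal (S T ω - S 0 ω) = Y ω
        rw [hS.init ω, sub_zero]
      calc ENNReal.ofReal (T ^ (-θ)) * Y ω
          = ∫⁻ _ in Ioc 0 T, ENNReal.ofReal (T ^ (-θ)) ∂(hS.path ω).measure := by
            rw [setLIntegral_const, hmeaseq]
        _ ≤ ∫⁻ t in Ioc 0 T, ENNReal.ofReal (t ^ (-θ)) ∂(hS.path ω).measure := by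
            refine setLIntegral_mono' measurableSet_Ioc fun t ht => ?_
            exact ENNReal.ofReal_le_ofReal
              (Real.rpow_le_rpow_of_nonpos ht.1 ht.2 (neg_nonpos.mpr hθ))
        _ = hS.integral (fun t => t ^ (-θ)) (Ioc 0 T) ω := rfl
    have h1 := my_rpow_anti hp hge
    rwa [ENNReal.mul_rpow_of_ne_top ENNReal.ofReal_ne_top (by rw [hYdef]; exact ENNReal.ofReal_ne_top),
      ENNReal.ofReal_rpow_of_pos (Real.rpow_pos_of_pos hT (-θ))] at h1
  -- integrate
  have hGle : ∫⁻ ω, G ω ∂ℙ ≤ ENNReal.ofReal (a ^ p * (1 + K)) := by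
    rw [hGdef]
    simp only
    rw [lintegral_add_left measurable_const, lintegral_const, measure_univ, mul_one,
      lintegral_tsum (fun k => (measurable_const.indicator (hA_k k)).aemeasurable)]
    have hterm : ∀ k : ℕ, ∫⁻ ω, ({ω : Ω | S T ω ≤ (1/2) ^ k * a}).indicator
        (fun _ => coeff k) ω ∂ℙ ≤ ENNReal.ofReal (a ^ p * u k) := by
      intro k
      rw [lintegral_indicator_const (hA_k k)]
      calc coeff k * ℙ {ω : Ω | S T ω ≤ (1/2) ^ k * a}
          ≤ coeff k * ENNReal.ofReal (Real.exp (1 - β * c₁ ^ k)) :=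
            mul_le_mul_right (hMarkov k) _
        _ = ENNReal.ofReal (a ^ p * u k) := by
            rw [hcoeffdef]
            rw [← ENNReal.ofReal_mul (by positivity)]
            congr 1
            rw [hudef]
            simp only
            rw [Real.mul_rpow (by positivity) ha0.le]
            ring
    calc ENNReal.ofReal (a ^ p) + ∑' k, ∫⁻ ω, ({ω : Ω | S T ω ≤ (1/2) ^ k * a}).indicator
          (fun _ => coeff k) ω ∂ℙ
        ≤ ENNReal.ofReal (a ^ p) + ∑' k, ENNReal.ofReal (a ^ p * u k) :=
          add_le_add_right (ENNReal.tsum_le_tsum hterm) _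
      _ = ENNReal.ofReal (a ^ p) + ENNReal.ofReal (a ^ p * K) := by
          rw [← ENNReal.ofReal_tsum_of_nonneg (fun k => by positivity)
            (hsummable.mul_left (a ^ p)), tsum_mul_left, hKdef]
      _ = ENNReal.ofReal (a ^ p * (1 + K)) := by
          rw [← ENNReal.ofReal_add (by positivity) (by positivity)]
          congr 1
          ring
  calc ∫⁻ ω, (hS.integral (fun t => t ^ (-θ)) (Ioc 0 T) ω) ^ p ∂ℙ
      ≤ ∫⁻ ω, ENNReal.ofReal ((T ^ (-θ)) ^ p) * (Y ω) ^ p ∂ℙ := lintegral_mono hX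
    _ = ENNReal.ofReal ((T ^ (-θ)) ^ p) * ∫⁻ ω, (Y ω) ^ p ∂ℙ :=
        lintegral_const_mul' _ _ ENNReal.ofReal_ne_top
    _ ≤ ENNReal.ofReal ((T ^ (-θ)) ^ p) * ∫⁻ ω, G ω ∂ℙ :=
        mul_le_mul_right (lintegral_mono hpoint) _
    _ ≤ ENNReal.ofReal ((T ^ (-θ)) ^ p) * ENNReal.ofReal (a ^ p * (1 + K)) :=
        mul_le_mul_right hGle _
    _ = ENNReal.ofReal ((1 + K) * T ^ (-(p * θ)) * b ^ (-p)) := by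
        rw [← ENNReal.ofReal_mul (by positivity)]
        congr 1
        have e1 : (T ^ (-θ)) ^ p = T ^ (-(p * θ)) := by
          rw [← Real.rpow_mul hT0, show -θ * p = -(p * θ) by ring]
        have e2 : a ^ p = b ^ (-p) := by
          rw [hadef, Real.inv_rpow hb0.le, ← Real.rpow_neg hb0.le]
        rw [e1, e2]
        ring
    _ = ENNReal.ofReal ((1 + K) * T ^ (-(p * θ)) * genInv φ (1 / T) ^ (-p)) := by rw [hbdef]
end
end

section
/- Let (S_t)_{t≥0} be a subordinator with Laplace exponent given by a Bernstein function φ with φ(0+)=0, and assume liminf_{s→∞} φ(2s)/φ(s) > 1. Then for every p<0 and λ>0 there is a constant C=C(p,λ,φ)>0 such that E[(∫₀^T e^{−λt} dS_t)^p] ≤ C · [φ^{−1}(1/(T∧1))]^{−p} for all T>0. -/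
open MeasureTheory ProbabilityTheory Filter Set
open scoped ENNReal NNReal Topology

noncomputable section

variable {Ω : Type*}

namespace NegMomAux

/-- Antitonicity of `x ↦ x^p` on `ℝ≥0∞` for `p < 0`. -/
lemma rpow_antitone {p : ℝ} (hp : p < 0) {x y : ℝ≥0∞} (hxy : x ≤ y) :
    y ^ p ≤ x ^ p := by
  have hle : x ^ (-p) ≤ y ^ (-p) := ENNReal.rpow_le_rpow hxy (by linarith)
  calc y ^ p = (y ^ (-p))⁻¹ := by rw [← ENNReal.rpow_neg, neg_neg]
    _ ≤ (x ^ (-p))⁻¹ := ENNReal.inv_le_inv.mpr hle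
    _ = x ^ p := by rw [← ENNReal.rpow_neg, neg_neg]

/-- Antitonicity of `x ↦ (ofReal x)^p` for `p < 0`. -/
lemma rpow_neg_antitone {p : ℝ} (hp : p < 0) {x y : ℝ} (hx : 0 < x) (hxy : x ≤ y) :
    ENNReal.ofReal y ^ p ≤ ENNReal.ofReal x ^ p := by
  have hle : ENNReal.ofReal x ^ (-p) ≤ ENNReal.ofReal y ^ (-p) :=
    ENNReal.rpow_le_rpow (ENNReal.ofReal_le_ofReal hxy) (by linarith)
  calc ENNReal.ofReal y ^ p = (ENNReal.ofReal y ^ (-p))⁻¹ := by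
        rw [← ENNReal.rpow_neg, neg_neg]
    _ ≤ (ENNReal.ofReal x ^ (-p))⁻¹ := ENNReal.inv_le_inv.mpr hle
    _ = ENNReal.ofReal x ^ p := by rw [← ENNReal.rpow_neg, neg_neg]

lemma rpow_neg_antitone' {p : ℝ} (hp : p < 0) {x y : ℝ} (hxy : x ≤ y) :
    ENNReal.ofReal y ^ p ≤ ENNReal.ofReal x ^ p := by
  rcases le_or_gt x 0 with h | h
  · rw [ENNReal.ofReal_eq_zero.mpr h, ENNReal.zero_rpow_of_neg hp]
    exact le_top
  · exact rpow_neg_antitone hp h hxy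

lemma summable_main {c q : ℝ} (hc : 1 < c) (hq : 0 ≤ q) :
    Summable (fun k : ℕ => ((2:ℝ) ^ (k+1)) ^ q * Real.exp (2 - c ^ k)) := by
  have hlog2 : (0:ℝ) < Real.log 2 := Real.log_pos one_lt_two
  set A : ℝ := q * Real.log 2 + Real.log 2 with hA
  set B : ℝ := q * Real.log 2 + 2 with hB
  have hA0 : 0 ≤ A := by positivity
  have hB0 : 0 ≤ B := by positivity
  have hto : Tendsto (fun k : ℕ => (k:ℝ) ^ 1 / c ^ k) atTop (𝓝 0) :=
    tendsto_pow_const_div_const_pow_of_one_lt 1 hc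
  have hev0 : ∀ᶠ k : ℕ in atTop, (k:ℝ) ^ 1 / c ^ k < 1 / (A + B + 1) :=
    hto.eventually_lt_const (by positivity)
  have hev : ∀ᶠ k : ℕ in atTop,
      ‖((2:ℝ) ^ (k+1)) ^ q * Real.exp (2 - c ^ k)‖ ≤ 1 * ‖((2:ℝ)⁻¹) ^ k‖ := by
    filter_upwards [hev0, eventually_ge_atTop 1] with k hk hk1
    have hck : (0:ℝ) < c ^ k := pow_pos (by linarith) k
    have hk' : (A + B + 1) * k < c ^ k := by
      rw [div_lt_div_iff₀ hck (by positivity)] at hk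
      simp only [pow_one] at hk
      linarith
    have h1 : (1:ℝ) ≤ (k:ℝ) := by exact_mod_cast hk1
    have hck_ge : A * k + B ≤ c ^ k := by
      nlinarith [mul_le_mul_of_nonneg_left h1 hB0,
        mul_nonneg hA0 (show (0:ℝ) ≤ (k:ℝ) by positivity)]
    have hmain : ((2:ℝ) ^ (k+1)) ^ q * Real.exp (2 - c ^ k) ≤ ((2:ℝ)⁻¹) ^ k := by
      have h2p : (0:ℝ) < (2:ℝ) ^ (k+1) := by positivity
      have e1 : ((2:ℝ) ^ (k+1)) ^ q = Real.exp ((k+1) * Real.log 2 * q) := by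
        rw [Real.rpow_def_of_pos h2p, Real.log_pow]
        push_cast; ring_nf
      have e2 : ((2:ℝ)⁻¹) ^ k = Real.exp (-(k * Real.log 2)) := by
        rw [inv_pow, ← Real.exp_log (show (0:ℝ) < (2:ℝ)^k by positivity), Real.log_pow,
          ← Real.exp_neg]
      rw [e1, e2, ← Real.exp_add, Real.exp_le_exp]
      rw [hA, hB] at hck_ge
      linarith
    rw [Real.norm_eq_abs, Real.norm_eq_abs, one_mul, abs_of_nonneg (by positivity),
      abs_of_nonneg (by positivity)]
    exact hmain
  exact summable_of_isBigO_nat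
    (summable_geometric_of_lt_one (by norm_num) (by norm_num))
    (Asymptotics.isBigO_iff.mpr ⟨1, hev⟩)

lemma pointwise_bound {p : ℝ} (hp : p < 0) (x : ℝ) :
    ENNReal.ofReal x ^ p ≤ (if 1 ≤ x then 1 else 0)
      + ∑' k : ℕ, (if x < ((2:ℝ)⁻¹) ^ k then ENNReal.ofReal (((2:ℝ) ^ (k+1)) ^ (-p)) else 0) := by
  rcases le_or_gt 1 x with h1 | h1
  · rw [if_pos h1]
    refine le_trans ?_ le_self_add
    exact ENNReal.rpow_le_one_of_one_le_of_neg (ENNReal.one_le_ofReal.mpr h1) hp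
  rcases le_or_gt x 0 with h0 | h0
  · rw [ENNReal.ofReal_eq_zero.mpr h0, ENNReal.zero_rpow_of_neg hp]
    refine le_trans (le_of_eq ?_) le_add_self
    symm
    rw [← top_le_iff]
    calc (⊤:ℝ≥0∞) = ∑' _ : ℕ, (1:ℝ≥0∞) := (ENNReal.tsum_const_eq_top_of_ne_zero one_ne_zero).symm
      _ ≤ _ := by
          refine ENNReal.tsum_le_tsum fun k => ?_
          rw [if_pos (lt_of_le_of_lt h0 (by positivity))]
          exact ENNReal.one_le_ofReal.mpr
            (Real.one_le_rpow (one_le_pow₀ one_le_two) (by linarith))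
  · -- 0 < x < 1
    have hex : ∃ n : ℕ, ((2:ℝ)⁻¹) ^ (n+1) ≤ x := by
      obtain ⟨n, hn⟩ := exists_pow_lt_of_lt_one h0 (show (2:ℝ)⁻¹ < 1 by norm_num)
      exact ⟨n, le_trans (pow_le_pow_of_le_one (by norm_num) (by norm_num) n.le_succ) hn.le⟩
    obtain ⟨k, hk1, hk2⟩ : ∃ k : ℕ, ((2:ℝ)⁻¹) ^ (k+1) ≤ x ∧ x < ((2:ℝ)⁻¹) ^ k := by
      refine ⟨Nat.find hex, Nat.find_spec hex, ?_⟩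
      rcases Nat.eq_zero_or_pos (Nat.find hex) with hk0 | hkpos
      · rw [hk0, pow_zero]; exact h1
      · have hlt : Nat.find hex - 1 < Nat.find hex := Nat.sub_lt hkpos one_pos
        have h := Nat.find_min hex hlt
        push_neg at h
        rwa [Nat.sub_add_cancel hkpos] at h
    have step1 : ENNReal.ofReal x ^ p ≤ ENNReal.ofReal (((2:ℝ)⁻¹) ^ (k+1)) ^ p :=
      rpow_neg_antitone hp (by positivity) hk1
    have step2 : ENNReal.ofReal (((2:ℝ)⁻¹) ^ (k+1)) ^ p
        = ENNReal.ofReal (((2:ℝ) ^ (k+1)) ^ (-p)) := by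
      rw [ENNReal.ofReal_rpow_of_pos (by positivity)]
      congr 1
      rw [inv_pow, Real.inv_rpow (by positivity), ← Real.rpow_neg (by positivity)]
    refine le_trans step1 ?_
    rw [step2]
    refine le_trans ?_ le_add_self
    calc ENNReal.ofReal (((2:ℝ) ^ (k+1)) ^ (-p))
        = (if x < ((2:ℝ)⁻¹) ^ k then ENNReal.ofReal (((2:ℝ) ^ (k+1)) ^ (-p)) else 0) := by
          rw [if_pos hk2]
      _ ≤ _ := ENNReal.le_tsum k

end NegMomAux


/-- **Negative-moment estimate for `∫₀^T e^{−λt} dS_t`.**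
If `liminf_{s→∞} φ(2s)/φ(s) > 1`, then for every `p < 0` and `λ > 0` there is `C > 0` with
`E[(∫₀^T e^{−λt} dS_t)^p] ≤ C [φ^{−1}(1/(T∧1))]^{−p}` for all `T > 0`. -/
theorem negative_moment_exponential_integral
    [MeasureSpace Ω] [IsProbabilityMeasure (ℙ : Measure Ω)]
    (S : ℝ → Ω → ℝ) (hS : IsSubordinator S)
    (φ : ℝ → ℝ) (hφ : IsBernstein φ) (hLap : IsLaplaceExponent S φ)
    (h : 1 < Filter.liminf (fun s => φ (2 * s) / φ s) atTop)
    (p lam : ℝ) (hp : p < 0) (hlam : 0 < lam) :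
    ∃ C > (0 : ℝ), ∀ T : ℝ, 0 < T →
      ∫⁻ ω, (hS.integral (fun t => Real.exp (-(lam * t))) (Ioc 0 T) ω) ^ p ∂ℙ
        ≤ ENNReal.ofReal (C * genInv φ (1 / min T 1) ^ (-p)) := by
  classical
  have φpos : ∀ s : ℝ, 0 < s → 0 < φ s := hφ.pos
  -- monotonicity of φ on [0, ∞)
  have hmono : ∀ ⦃s t : ℝ⦄, 0 ≤ s → s ≤ t → φ s ≤ φ t := by
    have hmo : MonotoneOn φ (Ioi 0) := by
      apply monotoneOn_of_deriv_nonneg (convex_Ioi 0) hφ.smooth.continuousOn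
      · rw [interior_Ioi]
        exact hφ.smooth.differentiableOn (by simp)
      · intro x hx
        rw [interior_Ioi] at hx
        have h1 := hφ.alt 1 le_rfl x hx
        rw [iteratedDerivWithin_one,
          derivWithin_of_isOpen isOpen_Ioi hx] at h1
        simpa using h1
    intro s t hs hst
    rcases eq_or_lt_of_le hs with rfl | hs'
    · rcases eq_or_lt_of_le hst with rfl | ht'
      · exact le_rfl
      · rw [hφ.zero]; exact (φpos t ht').le
    · exact hmo hs' (lt_of_lt_of_le hs' hst) hst
  -- doubling property
  obtain ⟨c, hc1, s₀, hs₀pos, hdouble⟩ :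
      ∃ c : ℝ, 1 < c ∧ ∃ s₀ : ℝ, 0 < s₀ ∧ ∀ s : ℝ, s₀ ≤ s → c * φ s ≤ φ (2 * s) := by
    have hbdd : Filter.IsBoundedUnder (· ≥ ·) atTop (fun s => φ (2 * s) / φ s) := by
      refine isBoundedUnder_of_eventually_ge (a := 0) ?_
      filter_upwards [eventually_gt_atTop (0:ℝ)] with s hs
      exact div_nonneg (φpos _ (by linarith)).le (φpos _ hs).le
    have hcL : (1 + Filter.liminf (fun s => φ (2 * s) / φ s) atTop) / 2
        < Filter.liminf (fun s => φ (2 * s) / φ s) atTop := by linarith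
    have hev := Filter.eventually_lt_of_lt_liminf hcL hbdd
    rw [eventually_atTop] at hev
    obtain ⟨s₀', hs₀'⟩ := hev
    refine ⟨(1 + Filter.liminf (fun s => φ (2 * s) / φ s) atTop) / 2, by linarith, max s₀' 1, lt_of_lt_of_le one_pos (le_max_right _ _), ?_⟩
    intro s hs
    have hspos : (0:ℝ) < s := lt_of_lt_of_le one_pos (le_trans (le_max_right _ _) hs)
    have h2 := hs₀' s (le_trans (le_max_left _ _) hs)
    exact ((lt_div_iff₀ (φpos s hspos)).mp h2).le
  -- iterated doubling
  have hchain : ∀ b : ℝ, s₀ ≤ b → ∀ k : ℕ, c ^ k * φ b ≤ φ (2 ^ k * b) := by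
    intro b hb k
    induction k with
    | zero => simp
    | succ n ih =>
        have hbpos : 0 < b := lt_of_lt_of_le hs₀pos hb
        have h2 : s₀ ≤ 2 ^ n * b :=
          le_trans hb (le_mul_of_one_le_left hbpos.le (one_le_pow₀ one_le_two))
        have hc0 : (0:ℝ) ≤ c := by linarith
        calc c ^ (n+1) * φ b = c * (c ^ n * φ b) := by ring
          _ ≤ c * φ (2 ^ n * b) := mul_le_mul_of_nonneg_left ih hc0
          _ ≤ φ (2 * (2 ^ n * b)) := hdouble _ h2
          _ = φ (2 ^ (n+1) * b) := by ring_nf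
  -- unboundedness of φ
  have hunb : ∀ y : ℝ, ∃ s : ℝ, 0 < s ∧ y < φ s := by
    intro y
    have hgrow : Tendsto (fun k : ℕ => c ^ k * φ s₀) atTop atTop :=
      (tendsto_pow_atTop_atTop_of_one_lt hc1).atTop_mul_const (φpos _ hs₀pos)
    obtain ⟨k, hk⟩ := (hgrow.eventually_gt_atTop y).exists
    exact ⟨2 ^ k * s₀, by positivity, lt_of_lt_of_le hk (hchain s₀ le_rfl k)⟩
  -- generalized inverse facts
  have hAne : ∀ y : ℝ, {s : ℝ | 0 < s ∧ y < φ s}.Nonempty := by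
    intro y; obtain ⟨s, h1, h2⟩ := hunb y; exact ⟨s, h1, h2⟩
  have hAbdd : ∀ y : ℝ, BddBelow {s : ℝ | 0 < s ∧ y < φ s} :=
    fun y => ⟨0, fun s hs => hs.1.le⟩
  have hgenInv_mono : ∀ y z : ℝ, y ≤ z → genInv φ y ≤ genInv φ z := fun y z hyz =>
    csInf_le_csInf (hAbdd y) (hAne z) fun s hs => ⟨hs.1, lt_of_le_of_lt hyz hs.2⟩
  have hgenInv_ge : ∀ y b : ℝ, (∀ s, 0 < s → y < φ s → b ≤ s) → b ≤ genInv φ y :=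
    fun y b hb => le_csInf (hAne y) fun s hs => hb s hs.1 hs.2
  have hgenInv_lt : ∀ y t : ℝ, genInv φ y < t → ∃ s, 0 < s ∧ y < φ s ∧ s < t := by
    intro y t ht
    obtain ⟨s, hs, hst⟩ := exists_lt_of_csInf_lt (hAne y) ht
    exact ⟨s, hs.1, hs.2, hst⟩
  have hgenInv_pos : ∀ y : ℝ, 0 < y → 0 < genInv φ y := by
    intro y hy
    have hev : ∀ᶠ s in 𝓝[>] (0:ℝ), φ s < y := hφ.zero_lim.eventually_lt_const hy
    rw [Filter.eventually_iff] at hev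
    obtain ⟨v, hv, hsub⟩ := mem_nhdsGT_iff_exists_Ioc_subset.mp hev
    refine lt_of_lt_of_le hv (hgenInv_ge y v ?_)
    intro s hs0 hys
    by_contra hsu
    push_neg at hsu
    exact absurd hys (not_lt.mpr (hsub ⟨hs0, hsu.le⟩).le)
  -- nonnegativity of S
  have hSnn : ∀ (u : ℝ) (ω : Ω), 0 ≤ u → 0 ≤ S u ω := by
    intro u ω hu
    have h := hS.mono ω hu
    simp only at h
    rwa [hS.init ω] at h
  -- Laplace transform as a lower integral
  have hLapL : ∀ r u : ℝ, 0 < r → 0 ≤ u →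
      ∫⁻ ω, ENNReal.ofReal (Real.exp (-(r * S u ω))) ∂ℙ
        = ENNReal.ofReal (Real.exp (-(u * φ r))) := by
    intro r u hr hu
    have hm : Measurable fun ω => Real.exp (-(r * S u ω)) :=
      Real.measurable_exp.comp (((hS.measurable u).const_mul r).neg)
    have hint : Integrable (fun ω => Real.exp (-(r * S u ω))) ℙ := by
      refine Integrable.mono' (integrable_const 1) hm.aestronglyMeasurable ?_
      refine ae_of_all _ fun ω => ?_
      rw [Real.norm_eq_abs, abs_of_pos (Real.exp_pos _)]
      exact Real.exp_le_one_iff.mpr (neg_nonpos.mpr (mul_nonneg hr.le (hSnn u ω hu)))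
    rw [← ofReal_integral_eq_lintegral_ofReal hint (ae_of_all _ fun ω => (Real.exp_pos _).le),
      hLap r hr u hu]
  -- Markov-type inequality
  have hMarkov : ∀ u r ε : ℝ, 0 ≤ u → 0 < r →
      ℙ {ω | S u ω < ε} ≤ ENNReal.ofReal (Real.exp (r * ε - u * φ r)) := by
    intro u r ε hu hr
    have hms : MeasurableSet {ω | S u ω < ε} :=
      measurableSet_lt (hS.measurable u) measurable_const
    have hle : ∀ ω, Set.indicator {ω | S u ω < ε} (fun _ => (1:ℝ≥0∞)) ω
        ≤ ENNReal.ofReal (Real.exp (r * ε) * Real.exp (-(r * S u ω))) := by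
      intro ω
      by_cases hω : ω ∈ {ω | S u ω < ε}
      · rw [Set.indicator_of_mem hω]
        rw [← Real.exp_add]
        have hω' : S u ω < ε := hω
        have h1 : r * S u ω ≤ r * ε := mul_le_mul_of_nonneg_left hω'.le hr.le
        exact ENNReal.one_le_ofReal.mpr (Real.one_le_exp (by linarith))
      · rw [Set.indicator_of_notMem hω]; exact zero_le'
    calc ℙ {ω | S u ω < ε}
        = ∫⁻ ω, Set.indicator {ω | S u ω < ε} (fun _ => (1:ℝ≥0∞)) ω ∂ℙ := by
          rw [← lintegral_indicator_one hms]; rfl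
      _ ≤ ∫⁻ ω, ENNReal.ofReal (Real.exp (r * ε) * Real.exp (-(r * S u ω))) ∂ℙ :=
          lintegral_mono hle
      _ = ENNReal.ofReal (Real.exp (r * ε))
            * ∫⁻ ω, ENNReal.ofReal (Real.exp (-(r * S u ω))) ∂ℙ := by
          simp_rw [ENNReal.ofReal_mul (Real.exp_pos (r * ε)).le]
          exact lintegral_const_mul' _ _ ENNReal.ofReal_ne_top
      _ = ENNReal.ofReal (Real.exp (r * ε)) * ENNReal.ofReal (Real.exp (-(u * φ r))) := by
          rw [hLapL r u hr hu]
      _ = ENNReal.ofReal (Real.exp (r * ε - u * φ r)) := by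
          rw [← ENNReal.ofReal_mul (Real.exp_pos _).le, ← Real.exp_add]
          ring_nf
  -- summability of the series
  have hsum : Summable (fun k : ℕ => ((2:ℝ) ^ (k+1)) ^ (-p) * Real.exp (2 - c ^ k)) :=
    NegMomAux.summable_main hc1 (by linarith)
  have hFnn : (0:ℝ) ≤ ∑' k : ℕ, ((2:ℝ) ^ (k+1)) ^ (-p) * Real.exp (2 - c ^ k) :=
    tsum_nonneg fun k => by positivity
  -- main moment bound for small u
  have hmain : ∀ u : ℝ, 0 < u → φ s₀ + 1 ≤ 1 / u →
      ∫⁻ ω, ENNReal.ofReal (S u ω) ^ p ∂ℙ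
        ≤ ENNReal.ofReal ((1 + ∑' k : ℕ, ((2:ℝ) ^ (k+1)) ^ (-p) * Real.exp (2 - c ^ k))
            * genInv φ (1 / u) ^ (-p)) := by
    intro u hu hyu
    set y : ℝ := 1 / u with hydef
    set a : ℝ := genInv φ y with hadef
    have ha_s₀ : s₀ ≤ a := by
      refine hgenInv_ge y s₀ fun s hs hys => ?_
      by_contra hss
      push_neg at hss
      have h3 : φ s ≤ φ s₀ := hmono hs.le hss.le
      linarith
    have ha_pos : 0 < a := lt_of_lt_of_le hs₀pos ha_s₀
    have hφ2a : y ≤ φ (2 * a) := by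
      obtain ⟨s, hs0, hys, hsa⟩ := hgenInv_lt y (2 * a) (by linarith)
      exact le_trans hys.le (hmono hs0.le hsa.le)
    have hka : ∀ k : ℕ, (c:ℝ) ^ k ≤ u * φ (2 ^ (k+1) * a) := by
      intro k
      have h1 : c ^ k * φ (2 * a) ≤ φ (2 ^ k * (2 * a)) := hchain (2 * a) (by linarith) k
      have h2 : (2:ℝ) ^ k * (2 * a) = 2 ^ (k+1) * a := by ring
      rw [h2] at h1
      have hc0 : (0:ℝ) ≤ c ^ k := by positivity
      have h3 : c ^ k * y ≤ φ (2 ^ (k+1) * a) :=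
        le_trans (mul_le_mul_of_nonneg_left hφ2a hc0) h1
      have h4 : u * (c ^ k * y) = c ^ k := by
        rw [hydef]; field_simp
      calc (c:ℝ) ^ k = u * (c ^ k * y) := h4.symm
        _ ≤ u * φ (2 ^ (k+1) * a) := mul_le_mul_of_nonneg_left h3 hu.le
    have hP : ∀ k : ℕ, ℙ {ω | a * S u ω < ((2:ℝ)⁻¹) ^ k}
        ≤ ENNReal.ofReal (Real.exp (2 - c ^ k)) := by
      intro k
      have hset : {ω | a * S u ω < ((2:ℝ)⁻¹) ^ k} = {ω | S u ω < ((2:ℝ)⁻¹) ^ k / a} := by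
        ext ω
        simp only [mem_setOf_eq]
        rw [lt_div_iff₀ ha_pos, mul_comm]
      rw [hset]
      refine le_trans
        (hMarkov u (2 ^ (k+1) * a) (((2:ℝ)⁻¹) ^ k / a) hu.le (by positivity)) ?_
      refine ENNReal.ofReal_le_ofReal (Real.exp_le_exp.mpr ?_)
      have harg : (2:ℝ) ^ (k+1) * a * (((2:ℝ)⁻¹) ^ k / a) = 2 := by
        rw [inv_pow]
        field_simp [ha_pos.ne']
        ring
      rw [harg]
      have h5 := hka k
      linarith
    have hmeas_aS : Measurable fun ω => a * S u ω := (hS.measurable u).const_mul a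
    have hcore : ∫⁻ ω, ENNReal.ofReal (a * S u ω) ^ p ∂ℙ
        ≤ ENNReal.ofReal (1 + ∑' k : ℕ, ((2:ℝ) ^ (k+1)) ^ (-p) * Real.exp (2 - c ^ k)) := by
      have hmeas1 : Measurable fun ω => (if 1 ≤ a * S u ω then (1:ℝ≥0∞) else 0) :=
        Measurable.ite (measurableSet_le measurable_const hmeas_aS) measurable_const
          measurable_const
      have hmeask : ∀ k : ℕ, Measurable fun ω =>
          (if a * S u ω < ((2:ℝ)⁻¹) ^ k then ENNReal.ofReal (((2:ℝ) ^ (k+1)) ^ (-p)) else 0) :=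
        fun k => Measurable.ite (measurableSet_lt hmeas_aS measurable_const) measurable_const
          measurable_const
      calc ∫⁻ ω, ENNReal.ofReal (a * S u ω) ^ p ∂ℙ
          ≤ ∫⁻ ω, ((if 1 ≤ a * S u ω then (1:ℝ≥0∞) else 0)
              + ∑' k : ℕ, (if a * S u ω < ((2:ℝ)⁻¹) ^ k
                  then ENNReal.ofReal (((2:ℝ) ^ (k+1)) ^ (-p)) else 0)) ∂ℙ :=
            lintegral_mono fun ω => NegMomAux.pointwise_bound hp (a * S u ω)
        _ = (∫⁻ ω, (if 1 ≤ a * S u ω then (1:ℝ≥0∞) else 0) ∂ℙ)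
              + ∫⁻ ω, (∑' k : ℕ, (if a * S u ω < ((2:ℝ)⁻¹) ^ k
                  then ENNReal.ofReal (((2:ℝ) ^ (k+1)) ^ (-p)) else 0)) ∂ℙ :=
            lintegral_add_left' hmeas1.aemeasurable _
        _ ≤ 1 + ∑' k : ℕ, ENNReal.ofReal (((2:ℝ) ^ (k+1)) ^ (-p))
              * ℙ {ω | a * S u ω < ((2:ℝ)⁻¹) ^ k} := by
            refine add_le_add ?_ ?_
            · calc ∫⁻ ω, (if 1 ≤ a * S u ω then (1:ℝ≥0∞) else 0) ∂ℙ
                  ≤ ∫⁻ _, (1:ℝ≥0∞) ∂ℙ := lintegral_mono fun ω => by split <;> simp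
                _ = 1 := by rw [lintegral_one, measure_univ]
            · rw [lintegral_tsum fun k => (hmeask k).aemeasurable]
              refine ENNReal.tsum_le_tsum fun k => ?_
              have hind : (fun ω => if a * S u ω < ((2:ℝ)⁻¹) ^ k
                    then ENNReal.ofReal (((2:ℝ) ^ (k+1)) ^ (-p)) else 0)
                  = Set.indicator {ω | a * S u ω < ((2:ℝ)⁻¹) ^ k}
                      (fun _ => ENNReal.ofReal (((2:ℝ) ^ (k+1)) ^ (-p))) := by
                funext ω
                rw [Set.indicator_apply]
                rfl
              rw [hind, lintegral_indicator (measurableSet_lt hmeas_aS measurable_const),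
                setLIntegral_const]
        _ ≤ 1 + ∑' k : ℕ, ENNReal.ofReal (((2:ℝ) ^ (k+1)) ^ (-p) * Real.exp (2 - c ^ k)) := by
            refine add_le_add_right (ENNReal.tsum_le_tsum fun k => ?_) 1
            rw [ENNReal.ofReal_mul (by positivity)]
            exact mul_le_mul_right (hP k) _
        _ = 1 + ENNReal.ofReal (∑' k : ℕ, ((2:ℝ) ^ (k+1)) ^ (-p) * Real.exp (2 - c ^ k)) := by
            rw [ENNReal.ofReal_tsum_of_nonneg (fun k => by positivity) hsum]
        _ = ENNReal.ofReal (1 + ∑' k : ℕ, ((2:ℝ) ^ (k+1)) ^ (-p) * Real.exp (2 - c ^ k)) := by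
            rw [ENNReal.ofReal_add zero_le_one hFnn, ENNReal.ofReal_one]
    have hpt : ∀ ω : Ω, ENNReal.ofReal (S u ω) ^ p
        = ENNReal.ofReal a ^ (-p) * ENNReal.ofReal (a * S u ω) ^ p := by
      intro ω
      have ha0 : ENNReal.ofReal a ≠ 0 := by
        simp only [ne_eq, ENNReal.ofReal_eq_zero, not_le]
        exact ha_pos
      rw [ENNReal.ofReal_mul ha_pos.le,
        ENNReal.mul_rpow_of_ne_top ENNReal.ofReal_ne_top ENNReal.ofReal_ne_top,
        ← mul_assoc, ← ENNReal.rpow_add _ _ ha0 ENNReal.ofReal_ne_top]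
      simp
    calc ∫⁻ ω, ENNReal.ofReal (S u ω) ^ p ∂ℙ
        = ∫⁻ ω, ENNReal.ofReal a ^ (-p) * ENNReal.ofReal (a * S u ω) ^ p ∂ℙ := by
          simp_rw [hpt]
      _ = ENNReal.ofReal a ^ (-p) * ∫⁻ ω, ENNReal.ofReal (a * S u ω) ^ p ∂ℙ :=
          lintegral_const_mul' _ _
            (ENNReal.rpow_ne_top_of_nonneg (by linarith) ENNReal.ofReal_ne_top)
      _ ≤ ENNReal.ofReal a ^ (-p)
            * ENNReal.ofReal (1 + ∑' k : ℕ, ((2:ℝ) ^ (k+1)) ^ (-p) * Real.exp (2 - c ^ k)) :=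
          mul_le_mul_right hcore _
      _ = ENNReal.ofReal ((1 + ∑' k : ℕ, ((2:ℝ) ^ (k+1)) ^ (-p) * Real.exp (2 - c ^ k))
            * a ^ (-p)) := by
          rw [ENNReal.ofReal_rpow_of_pos ha_pos,
            ← ENNReal.ofReal_mul (by positivity : (0:ℝ) ≤ a ^ (-p)), mul_comm]
  -- constants
  have hφs₀pos : 0 < φ s₀ := φpos s₀ hs₀pos
  have hu₁pos : 0 < 1 / (φ s₀ + 1) := by positivity
  have hrecip : 1 / (1 / (φ s₀ + 1)) = φ s₀ + 1 := one_div_one_div _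
  have hbound₁ := hmain (1 / (φ s₀ + 1)) hu₁pos (le_of_eq hrecip.symm)
  have hg₁pos : 0 < genInv φ (1 / (1 / (φ s₀ + 1))) ^ (-p) :=
    Real.rpow_pos_of_pos (hgenInv_pos _ (by rw [hrecip]; linarith)) _
  have ha₁pos : 0 < genInv φ 1 := hgenInv_pos 1 one_pos
  have ha₁p : 0 < genInv φ 1 ^ (-p) := Real.rpow_pos_of_pos ha₁pos _
  have hdpos : 0 < Real.exp (-lam) ^ p := Real.rpow_pos_of_pos (Real.exp_pos _) _
  have hKpos : 0 < 1 + ∑' k : ℕ, ((2:ℝ) ^ (k+1)) ^ (-p) * Real.exp (2 - c ^ k) := by linarith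
  set d : ℝ := Real.exp (-lam) ^ p with hddef
  set Kc : ℝ := 1 + ∑' k : ℕ, ((2:ℝ) ^ (k+1)) ^ (-p) * Real.exp (2 - c ^ k) with hKcdef
  set g₁ : ℝ := genInv φ (1 / (1 / (φ s₀ + 1))) ^ (-p) with hg₁def
  refine ⟨d * Kc + d * Kc * g₁ / genInv φ 1 ^ (-p), ?_, ?_⟩
  · have h1 : 0 < d * Kc := mul_pos hdpos hKpos
    have h2 : 0 ≤ d * Kc * g₁ / genInv φ 1 ^ (-p) :=
      div_nonneg (mul_nonneg h1.le hg₁pos.le) ha₁p.le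
    exact add_pos_of_pos_of_nonneg h1 h2
  intro T hT
  have hu0 : 0 < min T 1 := lt_min hT one_pos
  have hu1 : min T 1 ≤ 1 := min_le_right T 1
  have hR1 : ∀ ω, (hS.integral (fun t => Real.exp (-(lam * t))) (Ioc 0 T) ω) ^ p
      ≤ ENNReal.ofReal d * ENNReal.ofReal (S (min T 1) ω) ^ p := by
    intro ω
    rcases le_or_gt (S (min T 1) ω) 0 with hX | hX
    · rw [ENNReal.ofReal_eq_zero.mpr hX, ENNReal.zero_rpow_of_neg hp, ENNReal.mul_top]
      · exact le_top
      · simp only [ne_eq, ENNReal.ofReal_eq_zero, not_le]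
        exact hdpos
    · have hlow : ENNReal.ofReal (Real.exp (-lam)) * ENNReal.ofReal (S (min T 1) ω)
          ≤ hS.integral (fun t => Real.exp (-(lam * t))) (Ioc 0 T) ω := by
        calc ENNReal.ofReal (Real.exp (-lam)) * ENNReal.ofReal (S (min T 1) ω)
            = ∫⁻ _ in Ioc 0 (min T 1), ENNReal.ofReal (Real.exp (-lam))
                ∂(hS.path ω).measure := by
              rw [setLIntegral_const, StieltjesFunction.measure_Ioc]
              congr 1
              rw [show (hS.path ω) (min T 1) = S (min T 1) ω from rfl,
                show (hS.path ω) 0 = S 0 ω from rfl, hS.init ω, sub_zero]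
          _ ≤ ∫⁻ t in Ioc 0 (min T 1), ENNReal.ofReal (Real.exp (-(lam * t)))
                ∂(hS.path ω).measure := by
              refine setLIntegral_mono
                ((Real.measurable_exp.comp (measurable_id.const_mul lam).neg).ennreal_ofReal)
                fun t ht => ?_
              refine ENNReal.ofReal_le_ofReal (Real.exp_le_exp.mpr ?_)
              have h1 : t ≤ 1 := le_trans ht.2 hu1
              nlinarith [hlam.le]
          _ ≤ hS.integral (fun t => Real.exp (-(lam * t))) (Ioc 0 T) ω :=
              lintegral_mono_set (Ioc_subset_Ioc_right (min_le_left T 1))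
      have h2 := NegMomAux.rpow_antitone hp hlow
      rw [ENNReal.mul_rpow_of_ne_top ENNReal.ofReal_ne_top ENNReal.ofReal_ne_top,
        ENNReal.ofReal_rpow_of_pos (Real.exp_pos _), ← hddef] at h2
      exact h2
  calc ∫⁻ ω, (hS.integral (fun t => Real.exp (-(lam * t))) (Ioc 0 T) ω) ^ p ∂ℙ
      ≤ ∫⁻ ω, ENNReal.ofReal d * ENNReal.ofReal (S (min T 1) ω) ^ p ∂ℙ :=
        lintegral_mono hR1
    _ = ENNReal.ofReal d * ∫⁻ ω, ENNReal.ofReal (S (min T 1) ω) ^ p ∂ℙ :=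
        lintegral_const_mul' _ _ ENNReal.ofReal_ne_top
    _ ≤ ENNReal.ofReal ((d * Kc + d * Kc * g₁ / genInv φ 1 ^ (-p))
          * genInv φ (1 / min T 1) ^ (-p)) := by
        have hgmin : 0 < genInv φ (1 / min T 1) :=
          hgenInv_pos _ (one_div_pos.mpr hu0)
        have hgminp : 0 < genInv φ (1 / min T 1) ^ (-p) :=
          Real.rpow_pos_of_pos hgmin _
        by_cases hcase : φ s₀ + 1 ≤ 1 / min T 1
        · have hb := hmain (min T 1) hu0 hcase
          calc ENNReal.ofReal d * ∫⁻ ω, ENNReal.ofReal (S (min T 1) ω) ^ p ∂ℙ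
              ≤ ENNReal.ofReal d * ENNReal.ofReal (Kc * genInv φ (1 / min T 1) ^ (-p)) :=
                mul_le_mul_right hb _
            _ = ENNReal.ofReal (d * (Kc * genInv φ (1 / min T 1) ^ (-p))) :=
                (ENNReal.ofReal_mul hdpos.le).symm
            _ ≤ _ := by
                refine ENNReal.ofReal_le_ofReal ?_
                have h1 : 0 ≤ d * Kc * g₁ / genInv φ 1 ^ (-p) :=
                  div_nonneg (mul_nonneg (mul_pos hdpos hKpos).le hg₁pos.le) ha₁p.le
                nlinarith [hgminp.le]
        · push_neg at hcase
          have hu₁u : 1 / (φ s₀ + 1) ≤ min T 1 := by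
            have h1 := (div_lt_iff₀ hu0).mp hcase
            rw [div_le_iff₀ (by linarith : (0:ℝ) < φ s₀ + 1)]
            nlinarith
          have hmonopt : ∀ ω, ENNReal.ofReal (S (min T 1) ω) ^ p
              ≤ ENNReal.ofReal (S (1 / (φ s₀ + 1)) ω) ^ p := fun ω =>
            NegMomAux.rpow_antitone hp (ENNReal.ofReal_le_ofReal (hS.mono ω hu₁u))
          calc ENNReal.ofReal d * ∫⁻ ω, ENNReal.ofReal (S (min T 1) ω) ^ p ∂ℙ
              ≤ ENNReal.ofReal d * ∫⁻ ω, ENNReal.ofReal (S (1 / (φ s₀ + 1)) ω) ^ p ∂ℙ :=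
                mul_le_mul_right (lintegral_mono hmonopt) _
            _ ≤ ENNReal.ofReal d * ENNReal.ofReal (Kc * g₁) := mul_le_mul_right hbound₁ _
            _ = ENNReal.ofReal (d * (Kc * g₁)) := (ENNReal.ofReal_mul hdpos.le).symm
            _ ≤ _ := by
                refine ENNReal.ofReal_le_ofReal ?_
                have hga : genInv φ 1 ≤ genInv φ (1 / min T 1) :=
                  hgenInv_mono 1 _ (one_le_one_div hu0 hu1)
                have hgu : genInv φ 1 ^ (-p) ≤ genInv φ (1 / min T 1) ^ (-p) :=
                  Real.rpow_le_rpow ha₁pos.le hga (by linarith)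
                have key : d * Kc * g₁ / genInv φ 1 ^ (-p) * genInv φ 1 ^ (-p)
                    = d * Kc * g₁ := div_mul_cancel₀ _ ha₁p.ne'
                have h1 : 0 ≤ d * Kc * g₁ / genInv φ 1 ^ (-p) :=
                  div_nonneg (mul_nonneg (mul_pos hdpos hKpos).le hg₁pos.le) ha₁p.le
                have h2 : d * Kc * g₁ / genInv φ 1 ^ (-p) * genInv φ 1 ^ (-p)
                    ≤ d * Kc * g₁ / genInv φ 1 ^ (-p) * genInv φ (1 / min T 1) ^ (-p) :=
                  mul_le_mul_of_nonneg_left hgu h1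
                have h3 : 0 ≤ d * Kc := (mul_pos hdpos hKpos).le
                nlinarith [mul_le_mul_of_nonneg_right h3 hgminp.le]
end
end

section
/- Let g:(0,1)→(0,∞) be an increasing function and set κ := log₂(liminf_{s→0} g(2s)/g(s)). If κ > 0, then for every ε>0 one has limsup_{s→0} g(s)/s^{κ−ε} < ∞. -/
open Filter Set
open scoped Topology ENNReal

/-- **Regular-variation-type lemma.** Let `g : (0,1) → (0,∞)` be increasing and set
`κ := log₂(liminf_{s→0} g(2s)/g(s))`. If `κ > 0`, then for every `ε > 0` one has
`limsup_{s→0} g(s)/s^{κ−ε} < ∞`. -/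
theorem limsup_div_rpow_lt_top_of_liminf_ratio
    (g : ℝ → ℝ) (hpos : ∀ s ∈ Ioo (0 : ℝ) 1, 0 < g s)
    (hmono : MonotoneOn g (Ioo (0 : ℝ) 1))
    (κ : ℝ)
    (hκdef : κ = Real.logb 2 (Filter.liminf (fun s => g (2 * s) / g s) (𝓝[>] (0 : ℝ))))
    (hκ : 0 < κ) :
    ∀ ε : ℝ, 0 < ε →
      Filter.limsup (fun s => ENNReal.ofReal (g s / s ^ (κ - ε))) (𝓝[>] (0 : ℝ)) < ∞ := by
  intro ε hε
  set f : ℝ → ℝ := fun s => g (2 * s) / g s with hf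
  set L : ℝ := Filter.liminf f (𝓝[>] (0 : ℝ)) with hLdef
  -- eventually 1 ≤ f
  have hev1 : ∀ᶠ s in 𝓝[>] (0 : ℝ), 1 ≤ f s := by
    filter_upwards [Ioo_mem_nhdsGT_of_mem (by norm_num : (0:ℝ) ∈ Ico (0:ℝ) (1/2))] with s hs
    have h1 : s ∈ Ioo (0:ℝ) 1 := ⟨hs.1, by linarith [hs.2]⟩
    have h2 : 2 * s ∈ Ioo (0:ℝ) 1 := ⟨by linarith [hs.1], by linarith [hs.2]⟩
    have hle := hmono h1 h2 (by linarith [hs.1])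
    have := hpos s h1
    rw [hf]
    rw [le_div_iff₀ this]
    linarith
  -- coboundedness
  by_cases hcob : IsCoboundedUnder (· ≥ ·) (𝓝[>] (0 : ℝ)) f
  swap
  · exfalso
    have hL0 : L = 0 := by
      rw [hLdef, liminf_eq]
      apply Real.sSup_of_not_bddAbove
      intro hb
      obtain ⟨b, hb⟩ := hb
      exact hcob ⟨b, fun a ha => hb (eventually_map.mp ha)⟩
    have hz : Real.logb 2 L = 0 := by rw [hL0]; simp [Real.logb]
    simp only [hκdef, hz] at hκ
    exact lt_irrefl 0 hκ
  have hL1 : 1 ≤ L := le_liminf_of_le hcob hev1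
  have hL0 : (0:ℝ) < L := lt_of_lt_of_le one_pos hL1
  -- set up the auxiliary exponent and ratio bound
  obtain ⟨κ', hκ'pos, hκ'lt, hκ'gt⟩ :
      ∃ κ' : ℝ, 0 < κ' ∧ κ' < κ ∧ κ - ε < κ' := by
    refine ⟨κ - min ε κ / 2, ?_, ?_, ?_⟩
    · have : min ε κ ≤ κ := min_le_right _ _
      linarith
    · have : 0 < min ε κ := lt_min hε hκ
      linarith
    · have : min ε κ ≤ ε := min_le_left _ _
      linarith
  set c : ℝ := (2:ℝ) ^ κ' with hcdef
  clear_value c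
  have hc1 : 1 < c := by
    rw [hcdef]
    exact Real.one_lt_rpow_iff_of_pos (by norm_num) |>.mpr (Or.inl ⟨one_lt_two, hκ'pos⟩)
  have hc0 : 0 < c := lt_trans one_pos hc1
  have hcL : c < L := by
    have hLκ : L = (2:ℝ) ^ κ := by
      rw [hκdef]
      exact (Real.rpow_logb (by norm_num) (by norm_num) hL0).symm
    rw [hcdef, hLκ]
    exact Real.rpow_lt_rpow_left_iff one_lt_two |>.mpr hκ'lt
  have hbd : IsBoundedUnder (· ≥ ·) (𝓝[>] (0 : ℝ)) f := ⟨1, eventually_map.mpr hev1⟩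
  have hev : ∀ᶠ s in 𝓝[>] (0 : ℝ), c < f s :=
    eventually_lt_of_lt_liminf hcL hbd
  -- extract δ
  obtain ⟨δ₀, hδ₀, hsub⟩ := mem_nhdsGT_iff_exists_Ioo_subset.mp hev
  set δ : ℝ := min δ₀ (1/2) with hδdef
  have hδpos : 0 < δ := lt_min hδ₀ (by norm_num)
  have hδhalf : δ ≤ 1/2 := min_le_right _ _
  have hδle : δ ≤ δ₀ := min_le_left _ _
  clear_value δ
  have hδ1 : δ ∈ Ioo (0:ℝ) 1 := ⟨hδpos, by linarith⟩
  have hratio : ∀ s ∈ Ioo (0:ℝ) δ, c * g s < g (2 * s) := by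
    intro s hs
    have hs1 : s ∈ Ioo (0:ℝ) 1 := ⟨hs.1, by linarith [hs.2]⟩
    have hcf : c < f s := hsub ⟨hs.1, lt_of_lt_of_le hs.2 hδle⟩
    have hgs := hpos s hs1
    rw [hf] at hcf
    have := (lt_div_iff₀ hgs).mp hcf
    linarith
  -- key iteration lemma
  have key : ∀ n : ℕ, ∀ s : ℝ, 0 < s → 2 ^ n * s ≤ δ → g s * c ^ n ≤ g (2 ^ n * s) := by
    intro n
    induction n with
    | zero => intro s hs h; simp
    | succ n ih =>
      intro s hs h
      have hpow : (0:ℝ) < 2 ^ n := by positivity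
      have hsucc : (2:ℝ) ^ (n+1) = 2 * 2 ^ n := by ring
      rw [hsucc] at h
      have h2 : 2 ^ n * s ≤ δ / 2 := by nlinarith
      have hIH := ih s hs (by linarith)
      have htmem : 2 ^ n * s ∈ Ioo (0:ℝ) δ := ⟨by positivity, by linarith⟩
      have hr := hratio _ htmem
      have ht1 : 2 ^ n * s ∈ Ioo (0:ℝ) 1 := ⟨htmem.1, by linarith [htmem.2, hδ1.2]⟩
      have hgt := hpos _ ht1
      calc g s * c ^ (n+1) = (g s * c ^ n) * c := by ring
        _ ≤ g (2 ^ n * s) * c := mul_le_mul_of_nonneg_right hIH hc0.le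
        _ ≤ g (2 * (2 ^ n * s)) := by nlinarith
        _ = g (2 ^ (n+1) * s) := by ring_nf
  -- the constant
  set C : ℝ := g δ * (2:ℝ) ^ κ' / δ ^ κ' with hCdef
  clear_value C
  have main : ∀ s ∈ Ioo (0:ℝ) (δ/2), g s / s ^ (κ - ε) ≤ C := by
    intro s hs
    have hs0 : 0 < s := hs.1
    have hs1 : s < 1 := by linarith [hs.2, hδ1.2]
    have hds : (2:ℝ) < δ / s := by
      rw [lt_div_iff₀ hs0]; linarith [hs.2]
    have hds0 : (0:ℝ) < δ / s := by linarith
    set n : ℕ := ⌊Real.logb 2 (δ / s)⌋₊ with hndef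
    have hlogb_nonneg : 0 ≤ Real.logb 2 (δ / s) := by
      apply Real.logb_nonneg one_lt_two; linarith
    have hfl : (n:ℝ) ≤ Real.logb 2 (δ / s) := Nat.floor_le hlogb_nonneg
    have hfu : Real.logb 2 (δ / s) < (n:ℝ) + 1 := Nat.lt_floor_add_one _
    clear_value n
    have h2n : (2:ℝ) ^ n ≤ δ / s := by
      have : (2:ℝ) ^ (n:ℝ) ≤ (2:ℝ) ^ (Real.logb 2 (δ / s)) :=
        Real.rpow_le_rpow_left_iff one_lt_two |>.mpr hfl
      rwa [Real.rpow_natCast, Real.rpow_logb (by norm_num) (by norm_num) hds0] at this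
    have hns : 2 ^ n * s ≤ δ := by
      calc (2:ℝ) ^ n * s ≤ (δ / s) * s := mul_le_mul_of_nonneg_right h2n hs0.le
        _ = δ := div_mul_cancel₀ _ hs0.ne'
    have hkey := key n s hs0 hns
    have hmem : 2 ^ n * s ∈ Ioo (0:ℝ) 1 := ⟨by positivity, lt_of_le_of_lt hns hδ1.2⟩
    have hgle : g (2 ^ n * s) ≤ g δ := hmono hmem hδ1 hns
    have hgsδ : g s * c ^ n ≤ g δ := le_trans hkey hgle
    -- c ^ n = 2 ^ (κ' * n)
    have hcn : c ^ n = (2:ℝ) ^ (κ' * n) := by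
      rw [hcdef, ← Real.rpow_natCast ((2:ℝ) ^ κ') n, ← Real.rpow_mul (by norm_num)]
    -- lower bound for c ^ n
    have hcn_ge : (δ / s) ^ κ' / (2:ℝ) ^ κ' ≤ c ^ n := by
      have hexp : κ' * (Real.logb 2 (δ / s) - 1) ≤ κ' * n := by
        apply mul_le_mul_of_nonneg_left _ hκ'pos.le
        linarith
      have h1 : (2:ℝ) ^ (κ' * (Real.logb 2 (δ / s) - 1)) ≤ (2:ℝ) ^ (κ' * (n:ℝ)) :=
        Real.rpow_le_rpow_left_iff one_lt_two |>.mpr hexp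
      rw [hcn]
      have heq : (2:ℝ) ^ (κ' * (Real.logb 2 (δ / s) - 1)) = (δ / s) ^ κ' / (2:ℝ) ^ κ' := by
        rw [mul_sub, mul_one, Real.rpow_sub (by norm_num : (0:ℝ) < 2)]
        congr 1
        rw [mul_comm, Real.rpow_mul (by norm_num : (0:ℝ) ≤ 2),
          Real.rpow_logb (by norm_num) (by norm_num) hds0]
      calc (δ / s) ^ κ' / (2:ℝ) ^ κ'
          = (2:ℝ) ^ (κ' * (Real.logb 2 (δ / s) - 1)) := heq.symm
        _ ≤ (2:ℝ) ^ (κ' * (n:ℝ)) := h1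
    have hcnpos : (0:ℝ) < c ^ n := by positivity
    have hdspos : (0:ℝ) < (δ / s) ^ κ' / (2:ℝ) ^ κ' := by positivity
    -- g s ≤ C * s ^ κ'
    have hgsC : g s ≤ C * s ^ κ' := by
      have hgs0 : 0 < g s := hpos s ⟨hs0, hs1⟩
      have h1 : g s * ((δ / s) ^ κ' / (2:ℝ) ^ κ') ≤ g δ := by
        calc g s * ((δ / s) ^ κ' / (2:ℝ) ^ κ') ≤ g s * c ^ n :=
              mul_le_mul_of_nonneg_left hcn_ge hgs0.le
          _ ≤ g δ := hgsδ
      have hdiv : (δ / s) ^ κ' = δ ^ κ' / s ^ κ' := Real.div_rpow hδpos.le hs0.le κ'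
      have hδκ : (0:ℝ) < δ ^ κ' := by positivity
      have hsκ : (0:ℝ) < s ^ κ' := by positivity
      have h2κ : (0:ℝ) < (2:ℝ) ^ κ' := by positivity
      rw [hdiv] at h1
      rw [hCdef]
      rw [div_mul_eq_mul_div, le_div_iff₀ hδκ]
      have := mul_le_mul_of_nonneg_right h1 (mul_pos h2κ hsκ).le
      calc g s * δ ^ κ' = g s * (δ ^ κ' / s ^ κ' / (2:ℝ) ^ κ') * ((2:ℝ) ^ κ' * s ^ κ') := by
            field_simp
        _ ≤ g δ * ((2:ℝ) ^ κ' * s ^ κ') := this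
        _ = g δ * (2:ℝ) ^ κ' * s ^ κ' := by ring
    -- now divide
    have hspow : (0:ℝ) < s ^ (κ - ε) := Real.rpow_pos_of_pos hs0 _
    rw [div_le_iff₀ hspow]
    calc g s ≤ C * s ^ κ' := hgsC
      _ = C * s ^ (κ - ε) * s ^ (κ' - (κ - ε)) := by
          rw [mul_assoc, ← Real.rpow_add hs0]; ring_nf
      _ ≤ C * s ^ (κ - ε) * 1 := by
          apply mul_le_mul_of_nonneg_left
          · exact Real.rpow_le_one hs0.le hs1.le (by linarith)
          · have hC0 : 0 ≤ C := by
              have := (hpos δ hδ1).le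
              rw [hCdef]; positivity
            positivity
      _ = C * s ^ (κ - ε) := by ring
  -- conclude
  have hbound : ∀ᶠ s in 𝓝[>] (0:ℝ),
      ENNReal.ofReal (g s / s ^ (κ - ε)) ≤ ENNReal.ofReal C := by
    filter_upwards [Ioo_mem_nhdsGT_of_mem (⟨le_refl _, by linarith⟩ : (0:ℝ) ∈ Ico (0:ℝ) (δ/2))]
      with s hs
    exact ENNReal.ofReal_le_ofReal (main s hs)
  calc Filter.limsup (fun s => ENNReal.ofReal (g s / s ^ (κ - ε))) (𝓝[>] (0:ℝ))
      ≤ ENNReal.ofReal C := limsup_le_of_le (by isBoundedDefault) hbound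
    _ < ∞ := ENNReal.ofReal_lt_top
end

section
/- Let (S_t)_{t≥0} be a subordinator whose Laplace exponent is an unbounded Bernstein function φ with φ(0+)=0. Then for every p∈(0,1) and every T>0 one has Γ(1−p) · E[S_T^p] ≤ 2^p · T · [φ^{−1}(1/T)]^{−p} · Σ_{k=0}^∞ 2^{pk} φ(2^{−k} φ^{−1}(1/T)). -/
open MeasureTheory ProbabilityTheory Filter Set
open scoped ENNReal NNReal Topology

noncomputable section

variable {Ω : Type*}

section AuxLemmas

lemma exp_layer (x r : ℝ) (hx : 0 < x) (hr : 0 < r) :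
    ENNReal.ofReal (1 - Real.exp (-(r*x))) =
      ∫⁻ t in Ioo 0 r, ENNReal.ofReal (x * Real.exp (-(x*t))) := by
  have hcont : Continuous fun t : ℝ => x * Real.exp (-(x*t)) := by continuity
  have hint : IntegrableOn (fun t : ℝ => x * Real.exp (-(x*t))) (Ioo 0 r) :=
    (hcont.intervalIntegrable 0 r).1.mono_set Ioo_subset_Ioc_self
  rw [← ofReal_integral_eq_lintegral_ofReal hint]
  · congr 1
    have : ∫ t in Ioo 0 r, x * Real.exp (-(x*t)) = ∫ t in (0:ℝ)..r, x * Real.exp (-(x*t)) := by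
      rw [intervalIntegral.integral_of_le hr.le, integral_Ioc_eq_integral_Ioo]
    rw [this]
    have hderiv : ∀ t ∈ uIcc (0:ℝ) r, HasDerivAt (fun t => -Real.exp (-(x*t)))
        (x * Real.exp (-(x*t))) t := by
      intro t _
      have h1 : HasDerivAt (fun t : ℝ => -(x*t)) (-x) t := by
        simpa [Pi.neg_def] using ((hasDerivAt_id t).const_mul x).neg
      have := (Real.hasDerivAt_exp (-(x*t))).comp t h1
      simpa [mul_comm, Pi.neg_def, Function.comp_def] using this.neg
    rw [intervalIntegral.integral_eq_sub_of_hasDerivAt hderiv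
      (hcont.intervalIntegrable 0 r)]
    simp [mul_comm r x]; ring
  · filter_upwards with t using by positivity

lemma rpow_tail (p t : ℝ) (hp0 : 0 < p) (ht : 0 < t) :
    ∫⁻ r in Ioi t, ENNReal.ofReal (r ^ (-p-1)) = ENNReal.ofReal (t ^ (-p) / p) := by
  have hlt : (-p-1 : ℝ) < -1 := by linarith
  rw [← ofReal_integral_eq_lintegral_ofReal (integrableOn_Ioi_rpow_of_lt hlt ht)
    (by filter_upwards [ae_restrict_mem measurableSet_Ioi] with r hr using
      Real.rpow_nonneg (le_of_lt (ht.trans hr)) _)]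
  rw [integral_Ioi_rpow_of_lt hlt ht]
  congr 1
  have h1 : (-p-1) + 1 = -p := by ring
  rw [h1, neg_div, div_neg, neg_neg]

lemma rpow_piece (p a b : ℝ) (hp0 : 0 < p) (ha : 0 < a) (hab : a ≤ b) :
    ∫⁻ r in Ioc a b, ENNReal.ofReal (r ^ (-p-1)) =
      ENNReal.ofReal ((a ^ (-p) - b ^ (-p)) / p) := by
  have hzero : (0:ℝ) ∉ uIcc a b := by
    rw [uIcc_of_le hab]; intro h; exact absurd (h.1) (not_le.2 ha)
  have hint : IntegrableOn (fun r : ℝ => r ^ (-p-1)) (Ioc a b) :=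
    (intervalIntegral.intervalIntegrable_rpow (r := -p-1) (a := a) (b := b) (μ := volume)
      (Or.inr hzero)).1
  rw [← ofReal_integral_eq_lintegral_ofReal hint
    (by filter_upwards [ae_restrict_mem measurableSet_Ioc] with r hr using
      Real.rpow_nonneg (le_of_lt (ha.trans_le hr.1.le)) _)]
  have heq : ∫ r in Ioc a b, r ^ (-p-1) = ∫ r in a..b, r ^ (-p-1) := by
    rw [intervalIntegral.integral_of_le hab]
  rw [heq, integral_rpow (Or.inr ⟨by intro h; linarith [hp0], hzero⟩)]
  congr 1
  have h1 : (-p-1) + 1 = -p := by ring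
  rw [h1, div_neg, ← neg_div, neg_sub]

lemma gamma_repr (p x : ℝ) (hp0 : 0 < p) (hp1 : p < 1) (hx : 0 < x) :
    ∫⁻ r in Ioi 0, ENNReal.ofReal (r ^ (-p-1)) * ENNReal.ofReal (1 - Real.exp (-(r*x)))
      = ENNReal.ofReal (Real.Gamma (1-p) * x ^ p / p) := by
  set g : ℝ → ℝ≥0∞ := fun t => ENNReal.ofReal (x * Real.exp (-(x*t))) with hg
  have hgmeas : Measurable g := by
    apply Measurable.ennreal_ofReal; fun_prop
  set F : ℝ → ℝ → ℝ≥0∞ := fun r t =>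
    (Ioo 0 r).indicator (fun t => ENNReal.ofReal (r ^ (-p-1)) * g t) t with hF
  have step1 : ∫⁻ r in Ioi 0, ENNReal.ofReal (r ^ (-p-1)) * ENNReal.ofReal (1 - Real.exp (-(r*x)))
      = ∫⁻ r in Ioi 0, ∫⁻ t in Ioi 0, F r t := by
    refine setLIntegral_congr_fun measurableSet_Ioi ?_
    intro r hr
    beta_reduce
    rw [exp_layer x r hx hr, ← lintegral_const_mul' _ _ ENNReal.ofReal_ne_top]
    rw [hF]
    simp only
    rw [lintegral_indicator measurableSet_Ioo, Measure.restrict_restrict measurableSet_Ioo,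
      inter_eq_self_of_subset_left (Ioo_subset_Ioi_self)]
  have hmeas : AEMeasurable (fun q : ℝ × ℝ => F q.1 q.2)
      ((volume.restrict (Ioi (0:ℝ))).prod (volume.restrict (Ioi (0:ℝ)))) := by
    have : (fun q : ℝ × ℝ => F q.1 q.2) =
        Set.indicator {q : ℝ × ℝ | 0 < q.2 ∧ q.2 < q.1}
          (fun q => ENNReal.ofReal (q.1 ^ (-p-1)) * g q.2) := by
      ext q
      by_cases h : q.2 ∈ Ioo 0 q.1
      · rw [hF]; simp only [indicator_of_mem h]
        rw [indicator_of_mem (by exact h)]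
      · rw [hF]; simp only [indicator_of_notMem h]
        rw [indicator_of_notMem (by exact h)]
    rw [this]
    apply Measurable.aemeasurable
    apply Measurable.indicator
    · apply Measurable.mul (f := fun q : ℝ × ℝ => ENNReal.ofReal (q.1 ^ (-p-1))) (g := fun q : ℝ × ℝ => g q.2)
      · fun_prop
      · exact hgmeas.comp measurable_snd
    · exact MeasurableSet.inter (measurableSet_lt measurable_const measurable_snd)
        (measurableSet_lt measurable_snd measurable_fst)
  have step2 : ∫⁻ r in Ioi 0, ∫⁻ t in Ioi 0, F r t = ∫⁻ t in Ioi 0, ∫⁻ r in Ioi 0, F r t :=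
    lintegral_lintegral_swap hmeas
  have step3 : ∫⁻ t in Ioi 0, ∫⁻ r in Ioi 0, F r t
      = ∫⁻ t in Ioi 0, ENNReal.ofReal (x * Real.exp (-(x*t)) * (t ^ (-p) / p)) := by
    refine setLIntegral_congr_fun measurableSet_Ioi ?_
    intro t ht
    have hFt : ∀ r, F r t = (Ioi t).indicator (fun r => ENNReal.ofReal (r ^ (-p-1)) * g t) r := by
      intro r
      by_cases h : t < r
      · rw [hF]; simp only
        rw [indicator_of_mem (by exact ⟨ht, h⟩ : t ∈ Ioo 0 r), indicator_of_mem (by exact h)]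
      · rw [hF]; simp only
        rw [indicator_of_notMem (fun hc => h hc.2), indicator_of_notMem (by exact h)]
    simp_rw [hFt]
    rw [lintegral_indicator measurableSet_Ioi, Measure.restrict_restrict measurableSet_Ioi]
    rw [inter_eq_self_of_subset_left (Ioi_subset_Ioi ht.le)]
    rw [lintegral_mul_const' _ _ ENNReal.ofReal_ne_top, rpow_tail p t hp0 ht]
    have ht' : (0:ℝ) < t := ht
    rw [← ENNReal.ofReal_mul (by positivity)]
    congr 1
    ring
  have hint : IntegrableOn (fun t : ℝ => x * Real.exp (-(x*t)) * (t ^ (-p) / p)) (Ioi 0) := by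
    have h1 : IntegrableOn (fun t : ℝ => t ^ (-p) * Real.exp (-x * t)) (Ioi 0) := by
      simpa using integrableOn_rpow_mul_exp_neg_mul_rpow (p := 1) (s := -p) (b := x)
        (by linarith) one_pos hx
    have h2 : IntegrableOn (fun t : ℝ => x / p * (t ^ (-p) * Real.exp (-x * t))) (Ioi 0) :=
      h1.const_mul (x / p)
    apply h2.congr_fun ?_ measurableSet_Ioi
    intro t ht
    simp only
    ring
  have step4 : ∫⁻ t in Ioi 0, ENNReal.ofReal (x * Real.exp (-(x*t)) * (t ^ (-p) / p))
      = ENNReal.ofReal (Real.Gamma (1-p) * x ^ p / p) := by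
    rw [← ofReal_integral_eq_lintegral_ofReal hint
      (by filter_upwards [ae_restrict_mem measurableSet_Ioi] with t ht
          have ht' : (0:ℝ) < t := ht
          simp only [Pi.zero_apply]
          positivity)]
    congr 1
    have heq1 : ∫ t in Ioi 0, x * Real.exp (-(x*t)) * (t ^ (-p) / p)
        = (x / p) * ∫ t in Ioi 0, t ^ ((1-p)-1) * Real.exp (-(x*t)) := by
      rw [← integral_const_mul]
      refine setIntegral_congr_fun measurableSet_Ioi (fun t ht => ?_)
      have h0 : (1-p)-1 = -p := by ring
      rw [h0]; ring
    rw [heq1, Real.integral_rpow_mul_exp_neg_mul_Ioi (by linarith) hx]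
    have h2 : (1/x : ℝ) ^ (1-p) = x ^ (-(1-p)) := by
      rw [one_div, Real.inv_rpow hx.le, ← Real.rpow_neg hx.le]
    have h3 : x * x ^ (p-1) = x ^ p := by
      nth_rewrite 1 [← Real.rpow_one x]
      rw [← Real.rpow_add hx]
      congr 1
      ring
    rw [h2, neg_sub]
    linear_combination (Real.Gamma (1-p) / p) * h3
  rw [step1, step2, step3, step4]

-- dyadic decomposition of Ioc 0 u
lemma dyadic_cover (u : ℝ) (hu : 0 < u) :
    Ioc (0:ℝ) u = ⋃ k : ℕ, Ioc ((2:ℝ)^(-(k:ℝ)-1) * u) ((2:ℝ)^(-(k:ℝ)) * u) := by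
  ext r
  simp only [mem_Ioc, mem_iUnion]
  constructor
  · rintro ⟨hr0, hru⟩
    have hex : ∃ k : ℕ, (2:ℝ)^(-(k:ℝ)-1) * u < r := by
      obtain ⟨n, hn⟩ := pow_unbounded_of_one_lt (u / r) (one_lt_two (α := ℝ))
      refine ⟨n, ?_⟩
      have h2 : (2:ℝ)^(-(n:ℝ)-1) = ((2:ℝ)^(n+1:ℕ))⁻¹ := by
        rw [← Real.rpow_natCast 2 (n+1), ← Real.rpow_neg (by norm_num)]
        congr 1
        push_cast
        ring
      rw [h2]
      rw [inv_mul_lt_iff₀ (by positivity)]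
      calc u = (u / r) * r := by field_simp
        _ < 2^n * r := by exact mul_lt_mul_of_pos_right hn hr0
        _ ≤ 2^(n+1) * r := by
            apply mul_le_mul_of_nonneg_right _ hr0.le
            apply pow_le_pow_right₀ one_le_two (Nat.le_succ n)
    classical
    let k0 := Nat.find hex
    refine ⟨k0, Nat.find_spec hex, ?_⟩
    rcases Nat.eq_zero_or_pos k0 with h0 | h0
    · rw [h0]
      simpa using hru
    · have := Nat.find_min hex (m := k0 - 1) (by omega)
      push_neg at this
      have hcast : (-(↑(k0-1):ℝ)-1) = -(k0:ℝ) := by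
        have : ((k0-1 : ℕ) : ℝ) = (k0:ℝ) - 1 := by
          push_cast [Nat.cast_sub h0]
          ring
        rw [this]; ring
      rw [hcast] at this
      exact this
  · rintro ⟨k, h1, h2⟩
    constructor
    · exact lt_of_le_of_lt (by positivity) h1
    · calc r ≤ (2:ℝ)^(-(k:ℝ)) * u := h2
        _ ≤ (2:ℝ)^(-(0:ℝ)) * u := by
            apply mul_le_mul_of_nonneg_right _ hu.le
            apply Real.rpow_le_rpow_of_exponent_le one_le_two (by simp)
        _ = u := by norm_num

lemma two_rpow_pos (y : ℝ) : (0:ℝ) < (2:ℝ) ^ y := Real.rpow_pos_of_pos (by norm_num) y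

lemma det_bound (p u x : ℝ) (hp0 : 0 < p) (hp1 : p < 1) (hu : 0 < u) (hx : 0 ≤ x) :
    ENNReal.ofReal (Real.Gamma (1-p)) * ENNReal.ofReal x ^ p ≤
      ENNReal.ofReal (u ^ (-p)) +
        ENNReal.ofReal ((2^(p:ℝ) - 1) * u ^ (-p)) *
          ∑' k : ℕ, ENNReal.ofReal ((2:ℝ)^(p*k)) *
            ENNReal.ofReal (1 - Real.exp (-((2:ℝ)^(-(k:ℝ)) * u * x))) := by
  rcases eq_or_lt_of_le hx with h0 | hx
  · rw [← h0]
    simp [ENNReal.zero_rpow_of_pos hp0]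
  set c : ℕ → ℝ := fun k => (2:ℝ)^(-(k:ℝ)) * u with hc
  have hcpos : ∀ k, 0 < c k := fun k => mul_pos (two_rpow_pos _) hu
  have hcsucc : ∀ k : ℕ, c (k+1) = (2:ℝ)^(-(k:ℝ)-1) * u := by
    intro k; rw [hc]; simp only; congr 2; push_cast; ring
  -- main: Γ(1-p) x^p = p * ∫
  have hLHS : ENNReal.ofReal (Real.Gamma (1-p)) * ENNReal.ofReal x ^ p
      = ENNReal.ofReal p * ENNReal.ofReal (Real.Gamma (1-p) * x ^ p / p) := by
    rw [ENNReal.ofReal_rpow_of_pos hx, ← ENNReal.ofReal_mul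
      (Real.Gamma_nonneg_of_nonneg (by linarith : (0:ℝ) ≤ 1 - p)), ← ENNReal.ofReal_mul hp0.le]
    congr 1
    field_simp
  rw [hLHS, ← gamma_repr p x hp0 hp1 hx]
  -- split the integral
  have hsplit : Ioi (0:ℝ) = Ioc 0 u ∪ Ioi u := (Ioc_union_Ioi_eq_Ioi hu.le).symm
  set f : ℝ → ℝ≥0∞ := fun r =>
    ENNReal.ofReal (r ^ (-p-1)) * ENNReal.ofReal (1 - Real.exp (-(r*x))) with hf
  have hsum : ∫⁻ r in Ioi 0, f r = (∫⁻ r in Ioc 0 u, f r) + ∫⁻ r in Ioi u, f r := by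
    rw [hsplit]
    exact lintegral_union measurableSet_Ioi (Ioc_disjoint_Ioi le_rfl)
  -- tail bound
  have htail : ∫⁻ r in Ioi u, f r ≤ ENNReal.ofReal (u ^ (-p) / p) := by
    rw [← rpow_tail p u hp0 hu]
    refine setLIntegral_mono' measurableSet_Ioi (fun r hr => ?_)
    rw [hf]
    calc ENNReal.ofReal (r ^ (-p-1)) * ENNReal.ofReal (1 - Real.exp (-(r*x)))
        ≤ ENNReal.ofReal (r ^ (-p-1)) * 1 := by
          gcongr
          exact ENNReal.ofReal_le_one.2 (by simp [Real.exp_nonneg])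
      _ = ENNReal.ofReal (r ^ (-p-1)) := mul_one _
  -- dyadic bound
  have hpiece : ∀ k : ℕ, ∫⁻ r in Ioc (c (k+1)) (c k), f r ≤
      ENNReal.ofReal ((2:ℝ)^(p*k)) * ENNReal.ofReal (1 - Real.exp (-(c k * x)))
        * ENNReal.ofReal ((2^(p:ℝ) - 1) * u ^ (-p) / p) := by
    intro k
    have hck1 : c (k+1) ≤ c k := by
      rw [hc]
      apply mul_le_mul_of_nonneg_right _ hu.le
      apply Real.rpow_le_rpow_of_exponent_le one_le_two
      push_cast; linarith
    have step : ∫⁻ r in Ioc (c (k+1)) (c k), f r ≤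
        ENNReal.ofReal (1 - Real.exp (-(c k * x))) * ∫⁻ r in Ioc (c (k+1)) (c k),
          ENNReal.ofReal (r ^ (-p-1)) := by
      rw [← lintegral_const_mul' _ _ ENNReal.ofReal_ne_top]
      refine setLIntegral_mono' measurableSet_Ioc (fun r hr => ?_)
      rw [hf]
      simp only
      rw [mul_comm]
      refine mul_le_mul_left (ENNReal.ofReal_le_ofReal ?_) _
      have : Real.exp (-(c k * x)) ≤ Real.exp (-(r*x)) := by
        apply Real.exp_le_exp.2
        nlinarith [hr.2, hx]
      linarith
    refine step.trans ?_
    rw [rpow_piece p _ _ hp0 (hcpos (k+1)) hck1]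
    have hval : (c (k+1) ^ (-p) - c k ^ (-p)) / p = (2:ℝ)^(p*k) * ((2^(p:ℝ) - 1) * u ^ (-p) / p) := by
      have h1 : ∀ m : ℕ, c m ^ (-p) = (2:ℝ)^(p*m) * u ^ (-p) := by
        intro m
        rw [hc]
        simp only
        rw [Real.mul_rpow (two_rpow_pos _).le hu.le,
          ← Real.rpow_mul (by norm_num : (0:ℝ) ≤ 2)]
        have hm : (-(m:ℝ)) * (-p) = p * m := by ring
        rw [hm]
      rw [h1 (k+1), h1 k]
      have h2 : (2:ℝ)^(p*((k+1:ℕ):ℝ)) = (2:ℝ)^(p*(k:ℝ)) * (2:ℝ)^p := by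
        rw [← Real.rpow_add (by norm_num : (0:ℝ) < 2)]
        congr 1
        push_cast
        ring
      rw [h2]
      field_simp
    rw [hval, ENNReal.ofReal_mul (by positivity)]
    exact le_of_eq (by ring)
  -- assemble
  have hmono : ∀ i j : ℕ, i ≤ j → c j ≤ c i := by
    intro i j hij
    apply mul_le_mul_of_nonneg_right _ hu.le
    exact Real.rpow_le_rpow_of_exponent_le one_le_two (neg_le_neg (Nat.cast_le.2 hij))
  have hdis : Pairwise (Function.onFun Disjoint fun k : ℕ => Ioc (c (k+1)) (c k)) := by
    apply (pairwise_disjoint_on _).2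
    intro i j hij
    apply Set.disjoint_left.2
    rintro r ⟨hr1, hr2⟩ ⟨hr3, hr4⟩
    have : c j ≤ c (i+1) := hmono (i+1) j hij
    have : r ≤ c j := hr4
    linarith [hr1, hmono (i+1) j hij]
  have hcover : ∫⁻ r in Ioc 0 u, f r = ∑' k : ℕ, ∫⁻ r in Ioc (c (k+1)) (c k), f r := by
    have hset : Ioc (0:ℝ) u = ⋃ k : ℕ, Ioc (c (k+1)) (c k) := by
      rw [dyadic_cover u hu]
      exact iUnion_congr fun k => by rw [hcsucc k]
    rw [hset, lintegral_iUnion (fun k => measurableSet_Ioc) hdis]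
  set B : ℕ → ℝ≥0∞ := fun k => ENNReal.ofReal ((2:ℝ)^(p*(k:ℝ))) *
    ENNReal.ofReal (1 - Real.exp (-((2:ℝ)^(-(k:ℝ)) * u * x))) with hB
  have hBc : ∀ k : ℕ, ENNReal.ofReal ((2:ℝ)^(p*(k:ℝ))) *
      ENNReal.ofReal (1 - Real.exp (-(c k * x))) = B k := fun k => rfl
  have h2p1 : (0:ℝ) ≤ 2^(p:ℝ) - 1 := by
    have : (1:ℝ) = (2:ℝ)^(0:ℝ) := by norm_num
    rw [this]
    have := Real.rpow_le_rpow_of_exponent_le (one_le_two (α := ℝ)) hp0.le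
    linarith [this]
  calc ENNReal.ofReal p * ∫⁻ r in Ioi 0, f r
      = ENNReal.ofReal p * ((∑' k : ℕ, ∫⁻ r in Ioc (c (k+1)) (c k), f r)
          + ∫⁻ r in Ioi u, f r) := by rw [hsum, hcover]
    _ ≤ ENNReal.ofReal p * ((∑' k : ℕ, B k * ENNReal.ofReal ((2^(p:ℝ) - 1) * u ^ (-p) / p))
          + ENNReal.ofReal (u ^ (-p) / p)) := by
        gcongr with k
        exact (hpiece k).trans (le_of_eq (by rw [hBc k]))
    _ = ENNReal.ofReal (u ^ (-p)) +
        ENNReal.ofReal ((2^(p:ℝ) - 1) * u ^ (-p)) * ∑' k : ℕ, B k := by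
        rw [ENNReal.tsum_mul_right, mul_add]
        rw [← ENNReal.ofReal_mul hp0.le, mul_div_cancel₀ _ (ne_of_gt hp0)]
        rw [mul_comm (ENNReal.ofReal p), mul_assoc,
          mul_comm (ENNReal.ofReal ((2^(p:ℝ) - 1) * u ^ (-p) / p)),
          ← ENNReal.ofReal_mul hp0.le, mul_comm p, div_mul_cancel₀ _ (ne_of_gt hp0)]
        rw [add_comm, mul_comm (∑' k : ℕ, B k)]

lemma genInv_props (φ : ℝ → ℝ) (hsm : ContDiffOn ℝ (⊤ : ℕ∞) φ (Ioi 0))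
    (hlim : Tendsto φ (𝓝[>] 0) (𝓝 0))
    (hub : ∀ y : ℝ, ∃ s, 0 < s ∧ y < φ s) (y : ℝ) (hy : 0 < y) :
    0 < genInv φ y ∧ y ≤ φ (genInv φ y) := by
  set A := {s : ℝ | 0 < s ∧ y < φ s} with hA
  have hne : A.Nonempty := hub y
  obtain ⟨δ, hδ0, hδ⟩ : ∃ δ > 0, ∀ s ∈ Ioo (0:ℝ) δ, φ s < y := by
    have h1 : ∀ᶠ s in 𝓝[>] (0:ℝ), φ s < y := hlim.eventually_lt_const hy
    obtain ⟨δ', hδ'mem, hsub⟩ := mem_nhdsGT_iff_exists_Ioo_subset.1 h1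
    exact ⟨δ', by simpa using hδ'mem, fun s hs => hsub hs⟩
  have hlb : ∀ s ∈ A, δ ≤ s := by
    intro s hs
    by_contra hlt
    push_neg at hlt
    exact absurd (hδ s ⟨hs.1, hlt⟩) (not_lt.2 hs.2.le)
  have hbdd : BddBelow A := ⟨δ, hlb⟩
  have hu0 : 0 < genInv φ y := lt_of_lt_of_le hδ0 (le_csInf hne hlb)
  refine ⟨hu0, ?_⟩
  by_contra hcon
  push_neg at hcon
  have hcont : ContinuousAt φ (genInv φ y) :=
    (hsm.continuousOn.continuousAt (isOpen_Ioi.mem_nhds hu0))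
  have hev : ∀ᶠ s in 𝓝 (genInv φ y), φ s < y := hcont.eventually_lt_const hcon
  obtain ⟨ε, hε0, hε⟩ := Metric.eventually_nhds_iff.1 hev
  have hlb2 : ∀ s ∈ A, genInv φ y + ε ≤ s := by
    intro s hs
    have hge : genInv φ y ≤ s := csInf_le hbdd hs
    by_contra hlt
    push_neg at hlt
    have : dist s (genInv φ y) < ε := by
      rw [Real.dist_eq, abs_lt]
      constructor <;> [linarith; linarith]
    exact absurd (hε this) (not_lt.2 hs.2.le)
  have : genInv φ y + ε ≤ genInv φ y := le_csInf hne hlb2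
  linarith

end AuxLemmas

/-- **Key dyadic moment bound.** For a subordinator with unbounded Bernstein Laplace
exponent `φ`, `p ∈ (0,1)` and `T > 0`:
`Γ(1−p) E[S_T^p] ≤ 2^p T [φ^{−1}(1/T)]^{−p} Σ_{k≥0} 2^{pk} φ(2^{−k} φ^{−1}(1/T))`. -/
theorem gamma_moment_dyadic_bound
    [MeasureSpace Ω] [IsProbabilityMeasure (ℙ : Measure Ω)]
    (S : ℝ → Ω → ℝ) (hS : IsSubordinator S)
    (φ : ℝ → ℝ) (hφ : IsBernstein φ) (hLap : IsLaplaceExponent S φ)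
    (hub : ∀ y : ℝ, ∃ s, 0 < s ∧ y < φ s)
    (p : ℝ) (hp0 : 0 < p) (hp1 : p < 1) (T : ℝ) (hT : 0 < T) :
    ENNReal.ofReal (Real.Gamma (1 - p)) * ∫⁻ ω, ENNReal.ofReal (S T ω) ^ p ∂ℙ
      ≤ ENNReal.ofReal ((2 : ℝ) ^ p * T * genInv φ (1 / T) ^ (-p))
          * ∑' k : ℕ, ENNReal.ofReal
              ((2 : ℝ) ^ (p * k) * φ ((2 : ℝ) ^ (-(k : ℝ)) * genInv φ (1 / T))) := by
  have hT' : (0:ℝ) < 1/T := by positivity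
  obtain ⟨hu0, huφ⟩ := genInv_props φ hφ.smooth hφ.zero_lim hub (1/T) hT'
  set u := genInv φ (1/T) with hu
  have hSnn : ∀ ω, 0 ≤ S T ω := fun ω => by
    rw [← hS.init ω]; exact hS.mono ω hT.le
  -- expectation bound
  have hExp : ∀ r : ℝ, 0 < r →
      ∫⁻ ω, ENNReal.ofReal (1 - Real.exp (-(r * S T ω))) ∂ℙ
        ≤ ENNReal.ofReal (T * φ r) := by
    intro r hr
    have hmeas : Measurable fun ω => 1 - Real.exp (-(r * S T ω)) :=
      Measurable.sub measurable_const (((hS.measurable T).const_mul r).neg.exp)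
    have hexple : ∀ ω, Real.exp (-(r * S T ω)) ≤ 1 := fun ω =>
      Real.exp_le_one_iff.2 (by nlinarith [hSnn ω])
    have hintexp : Integrable (fun ω => Real.exp (-(r * S T ω))) ℙ := by
      apply Integrable.mono' (integrable_const (1:ℝ))
        (((hS.measurable T).const_mul r).neg.exp).aestronglyMeasurable
      filter_upwards with ω
      rw [Real.norm_eq_abs, abs_le]
      exact ⟨le_trans (by norm_num) (Real.exp_pos _).le, hexple ω⟩
    have hint : Integrable (fun ω => 1 - Real.exp (-(r * S T ω))) ℙ :=
      (integrable_const (1:ℝ)).sub hintexp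
    rw [← ofReal_integral_eq_lintegral_ofReal hint
      (ae_of_all _ fun ω => by simp only [Pi.zero_apply]; linarith [hexple ω])]
    apply ENNReal.ofReal_le_ofReal
    rw [integral_sub (integrable_const 1) hintexp, integral_const, probReal_univ]
    rw [hLap r hr T hT.le]
    simp only [ENNReal.toReal_one, smul_eq_mul, one_mul]
    nlinarith [Real.add_one_le_exp (-(T * φ r))]
  -- notation
  have hTφu : (1:ℝ) ≤ T * φ u := by
    rw [div_le_iff₀ hT] at huφ
    linarith
  have h2p1 : (0:ℝ) ≤ 2^(p:ℝ) - 1 := by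
    have h20 : (1:ℝ) = (2:ℝ)^(0:ℝ) := by norm_num
    have := Real.rpow_le_rpow_of_exponent_le (one_le_two (α := ℝ)) hp0.le
    rw [Real.rpow_zero] at this
    linarith
  have hmeask : ∀ k : ℕ, Measurable fun ω =>
      ENNReal.ofReal ((2:ℝ)^(p*(k:ℝ))) *
        ENNReal.ofReal (1 - Real.exp (-((2:ℝ)^(-(k:ℝ)) * u * S T ω))) := by
    intro k
    apply Measurable.const_mul
    apply Measurable.ennreal_ofReal
    exact Measurable.sub measurable_const
      (((hS.measurable T).const_mul _).neg.exp)
  calc ENNReal.ofReal (Real.Gamma (1 - p)) * ∫⁻ ω, ENNReal.ofReal (S T ω) ^ p ∂ℙ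
      = ∫⁻ ω, ENNReal.ofReal (Real.Gamma (1 - p)) * ENNReal.ofReal (S T ω) ^ p ∂ℙ :=
        (lintegral_const_mul' _ _ ENNReal.ofReal_ne_top).symm
    _ ≤ ∫⁻ ω, (ENNReal.ofReal (u ^ (-p)) +
          ENNReal.ofReal ((2^(p:ℝ) - 1) * u ^ (-p)) *
            ∑' k : ℕ, ENNReal.ofReal ((2:ℝ)^(p*(k:ℝ))) *
              ENNReal.ofReal (1 - Real.exp (-((2:ℝ)^(-(k:ℝ)) * u * S T ω)))) ∂ℙ :=
        lintegral_mono fun ω => det_bound p u (S T ω) hp0 hp1 hu0 (hSnn ω)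
    _ = ENNReal.ofReal (u ^ (-p)) +
          ENNReal.ofReal ((2^(p:ℝ) - 1) * u ^ (-p)) *
            ∑' k : ℕ, ∫⁻ ω, ENNReal.ofReal ((2:ℝ)^(p*(k:ℝ))) *
              ENNReal.ofReal (1 - Real.exp (-((2:ℝ)^(-(k:ℝ)) * u * S T ω))) ∂ℙ := by
        rw [lintegral_add_left measurable_const, lintegral_const, measure_univ, mul_one,
          lintegral_const_mul' _ _ ENNReal.ofReal_ne_top,
          lintegral_tsum (fun k => (hmeask k).aemeasurable)]
    _ ≤ ENNReal.ofReal (u ^ (-p)) +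
          ENNReal.ofReal ((2^(p:ℝ) - 1) * u ^ (-p)) *
            ∑' k : ℕ, ENNReal.ofReal T *
              ENNReal.ofReal ((2:ℝ)^(p*(k:ℝ)) * φ ((2:ℝ)^(-(k:ℝ)) * u)) := by
        gcongr with k
        rw [lintegral_const_mul' _ _ ENNReal.ofReal_ne_top]
        calc ENNReal.ofReal ((2:ℝ)^(p*(k:ℝ))) *
            ∫⁻ ω, ENNReal.ofReal (1 - Real.exp (-((2:ℝ)^(-(k:ℝ)) * u * S T ω))) ∂ℙ
            ≤ ENNReal.ofReal ((2:ℝ)^(p*(k:ℝ))) *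
              ENNReal.ofReal (T * φ ((2:ℝ)^(-(k:ℝ)) * u)) := by
              gcongr
              exact hExp _ (mul_pos (two_rpow_pos _) hu0)
          _ = ENNReal.ofReal T *
              ENNReal.ofReal ((2:ℝ)^(p*(k:ℝ)) * φ ((2:ℝ)^(-(k:ℝ)) * u)) := by
              rw [← ENNReal.ofReal_mul (by positivity), ← ENNReal.ofReal_mul hT.le]
              congr 1
              ring
    _ = ENNReal.ofReal (u ^ (-p)) +
          ENNReal.ofReal ((2^(p:ℝ) - 1) * u ^ (-p) * T) *
            ∑' k : ℕ, ENNReal.ofReal ((2:ℝ)^(p*(k:ℝ)) * φ ((2:ℝ)^(-(k:ℝ)) * u)) := by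
        rw [ENNReal.tsum_mul_left, ← mul_assoc, ← ENNReal.ofReal_mul
          (mul_nonneg h2p1 (Real.rpow_nonneg hu0.le (-p)))]
    _ ≤ ENNReal.ofReal (T * u ^ (-p)) *
          (∑' k : ℕ, ENNReal.ofReal ((2:ℝ)^(p*(k:ℝ)) * φ ((2:ℝ)^(-(k:ℝ)) * u))) +
          ENNReal.ofReal ((2^(p:ℝ) - 1) * u ^ (-p) * T) *
            ∑' k : ℕ, ENNReal.ofReal ((2:ℝ)^(p*(k:ℝ)) * φ ((2:ℝ)^(-(k:ℝ)) * u)) := by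
        gcongr
        calc ENNReal.ofReal (u ^ (-p))
            ≤ ENNReal.ofReal (T * u ^ (-p) * ((2:ℝ)^(p*((0:ℕ):ℝ)) * φ ((2:ℝ)^(-((0:ℕ):ℝ)) * u))) := by
              apply ENNReal.ofReal_le_ofReal
              push_cast
              simp only [mul_zero, neg_zero, Real.rpow_zero, one_mul]
              nlinarith [Real.rpow_nonneg (le_of_lt hu0) (-p), hTφu, hφ.pos u hu0]
          _ = ENNReal.ofReal (T * u ^ (-p)) *
              ENNReal.ofReal ((2:ℝ)^(p*((0:ℕ):ℝ)) * φ ((2:ℝ)^(-((0:ℕ):ℝ)) * u)) :=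
              ENNReal.ofReal_mul (by positivity)
          _ ≤ ENNReal.ofReal (T * u ^ (-p)) *
              ∑' k : ℕ, ENNReal.ofReal ((2:ℝ)^(p*(k:ℝ)) * φ ((2:ℝ)^(-(k:ℝ)) * u)) := by
              gcongr
              exact ENNReal.le_tsum 0
    _ = ENNReal.ofReal ((2:ℝ)^(p:ℝ) * T * u ^ (-p)) *
          ∑' k : ℕ, ENNReal.ofReal ((2:ℝ)^(p*(k:ℝ)) * φ ((2:ℝ)^(-(k:ℝ)) * u)) := by
        rw [← add_mul, ← ENNReal.ofReal_add (by positivity)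
          (mul_nonneg (mul_nonneg h2p1 (Real.rpow_nonneg hu0.le (-p))) hT.le)]
        congr 2
        ring
end
end
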